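/- arXiv:1902.08363 — 3 statements merged into one kernel-verified Lean document; each statement's English description precedes it below -/
import Mathlib

section
/- For every α ∈ (1,2), the infimum over all real x with g(α,x) ≠ 0 of the ratio Re(−g(α,x))/|g(α,x)| equals |cos(απ/2)|; in particular, Re(−g(α,x)) ≥ |cos(απ/2)|·|g(α,x)| for every real x. -/
open Matrix

/-- The Grünwald–Letnikov coefficients `g_k^{(α)}`. -/
noncomputable def gcoef (α : ℝ) : ℕ → ℝ
  | 0 => 1
  | (k+1) => (1 - (α + 1) / (k + 1 : ℕ)) * gcoef α k

/-- The WSGD coefficients `w_k^{(α)}`. -/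
noncomputable def wcoef (α : ℝ) : ℕ → ℝ
  | 0 => α / 2 * gcoef α 0
  | (k+1) => α / 2 * gcoef α (k+1) + (2 - α) / 2 * gcoef α k

/-- The generating function `g(α,x) = Σ_{k=0}^∞ w_k^{(α)} e^{𝐢(k-1)x}`. -/
noncomputable def genFun (α : ℝ) (x : ℝ) : ℂ :=
  ∑' k : ℕ, (wcoef α k : ℂ) * Complex.exp (Complex.I * ((k : ℂ) - 1) * (x : ℂ))

open Filter Topology Set Finset Real

/-! The coefficients `gcoef α k = (-1)^k C(α, k)` are those of the binomial series of `(1 - z)^α`.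
For `1 ≤ α ≤ 2` they are absolutely summable (the tail `k ≥ 2` is nonnegative and the partial
sums telescope), so the series converges to `(1 - z)^α` on the closed unit disc, and
`g(α, x) = e^{-ix} (α/2 + (2-α)/2 · e^{ix}) (1 - e^{ix})^α`. For `x = 2t` with `0 < t < π`,
writing `a = α - 1` and `c = (1 - a) π/2`, this becomes
`-g(α, 2t) = (2 sin t)^α e^{i(at + c)} (cos t - i a sin t)`, so `Re(-g)/|g| = P/√N` with
`P = cos (at + c) cos t + a sin (at + c) sin t` and `N = cos² t + a² sin² t`.
The bound `cos c · √N ≤ P` follows from `P ≥ 0` and the factorisation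
`P² - cos² c · N = B(t) B(π - t)`, where `B(t) = a sin t cos (at) - cos t sin (at) ≥ 0` on `[0, π]`.
As `t → 0⁺` the ratio tends to `cos c = |cos (απ/2)|`. -/

lemma gcoef_succ (α : ℝ) (k : ℕ) :
    gcoef α (k + 1) = (1 - (α + 1) / (k + 1)) * gcoef α k := by
  rw [gcoef]; push_cast; rfl

lemma gcoef_one (α : ℝ) : gcoef α 1 = -α := by
  rw [gcoef_succ, gcoef]; ring

lemma gcoef_eq_neg_one_pow_mul_choose (α : ℝ) (k : ℕ) :
    gcoef α k = (-1) ^ k * Ring.choose α k := by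
  induction k with
  | zero => simp [gcoef]
  | succ k ih =>
    have hchoose := Ring.choose_smul_choose α (Nat.le_add_right k 1)
    rw [Nat.add_sub_cancel_left, Ring.choose_one_right, Nat.choose_succ_self_right, nsmul_eq_mul]
      at hchoose
    push_cast at hchoose
    rw [gcoef_succ, ih]
    field_simp
    linear_combination (-1) ^ k * hchoose

/-- The partial sums telescope by Pascal's rule `C(α, k+1) = C(α-1, k) + C(α-1, k+1)`. -/
lemma sum_range_succ_gcoef (α : ℝ) (n : ℕ) :
    ∑ k ∈ range (n + 1), gcoef α k = gcoef (α - 1) n := by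
  induction n with
  | zero => simp [gcoef]
  | succ n ih =>
    have pascal := Ring.choose_succ_succ (α - 1) n
    rw [sub_add_cancel] at pascal
    rw [sum_range_succ, ih]
    simp only [gcoef_eq_neg_one_pow_mul_choose, pascal, pow_succ]
    ring

lemma gcoef_succ_nonpos {β : ℝ} (h0 : 0 ≤ β) (h1 : β ≤ 1) (n : ℕ) : gcoef β (n + 1) ≤ 0 := by
  induction n with
  | zero => rw [gcoef_one]; linarith
  | succ n ih =>
    rw [gcoef_succ]
    refine mul_nonpos_of_nonneg_of_nonpos ?_ ih
    rw [sub_nonneg, div_le_one (by positivity)]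
    push_cast; linarith

lemma gcoef_add_two_nonneg {α : ℝ} (h1 : 1 ≤ α) (h2 : α ≤ 2) (n : ℕ) :
    0 ≤ gcoef α (n + 2) := by
  induction n with
  | zero => rw [gcoef_succ, gcoef_one]; push_cast; nlinarith
  | succ n ih =>
    rw [gcoef_succ]
    refine mul_nonneg ?_ ih
    rw [sub_nonneg, div_le_one (by positivity)]
    push_cast; linarith

lemma summable_abs_gcoef {α : ℝ} (h1 : 1 ≤ α) (h2 : α ≤ 2) : Summable fun k ↦ |gcoef α k| := by
  rw [← summable_nat_add_iff 2]
  simp only [abs_of_nonneg (gcoef_add_two_nonneg h1 h2 _)]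
  refine summable_of_sum_range_le (c := α - 1) (gcoef_add_two_nonneg h1 h2) fun n ↦ ?_
  have htelescope := sum_range_succ_gcoef α (n + 1)
  rw [sum_range_succ', sum_range_succ', gcoef_one] at htelescope
  have := gcoef_succ_nonpos (β := α - 1) (by linarith) (by linarith) n
  have hzero : gcoef α 0 = 1 := rfl
  linarith

lemma hasSum_choose_mul_pow_of_norm_lt_one {a : ℂ} {z : ℂ} (hz : ‖z‖ < 1) :
    HasSum (fun k ↦ Ring.choose a k * z ^ k) ((1 + z) ^ a) := by
  have hz' : z ∈ Metric.eball (0 : ℂ) 1 := by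
    rw [← ENNReal.ofReal_one, Metric.eball_ofReal]; simpa using hz
  simpa [binomialSeries, FormalMultilinearSeries.coeff_ofScalars, mul_comm] using
    (Complex.one_add_cpow_hasFPowerSeriesOnBall_zero (a := a)).hasSum hz'

/-- Abel's theorem in its easy form: with absolutely summable coefficients, both sides are
continuous on the closed unit disc. -/
lemma hasSum_choose_mul_pow_of_norm_le_one {a : ℂ} (ha : 0 < a.re)
    (hs : Summable fun k ↦ ‖Ring.choose a k‖) {z : ℂ} (hz : ‖z‖ ≤ 1) :
    HasSum (fun k ↦ Ring.choose a k * z ^ k) ((1 + z) ^ a) := by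
  have hbound : ∀ k, ∀ w ∈ Metric.closedBall (0 : ℂ) 1,
      ‖Ring.choose a k * w ^ k‖ ≤ ‖Ring.choose a k‖ := by
    intro k w hw
    rw [norm_mul, norm_pow]
    exact mul_le_of_le_one_right (norm_nonneg _)
      (pow_le_one₀ (norm_nonneg w) (by simpa using hw))
  have hseries : ContinuousOn (fun w ↦ ∑' k, Ring.choose a k * w ^ k) (Metric.closedBall 0 1) :=
    continuousOn_tsum (fun k ↦ by fun_prop) hs hbound
  have hpow : ContinuousOn (fun w : ℂ ↦ (1 + w) ^ a) (Metric.closedBall 0 1) := by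
    intro w hw
    refine ((Complex.continuousAt_cpow_const_of_re_pos (Or.inl ?_) ha).comp
      (continuous_const.add continuous_id).continuousAt).continuousWithinAt
    have := Complex.abs_re_le_norm w
    simp only [Metric.mem_closedBall, dist_zero_right] at hw
    show 0 ≤ (1 + w).re
    rw [Complex.add_re, Complex.one_re]
    linarith [abs_le.mp (this.trans hw)]
  have heq : EqOn (fun w ↦ ∑' k, Ring.choose a k * w ^ k) (fun w ↦ (1 + w) ^ a)
      (Metric.ball 0 1) := fun w hw ↦
    (hasSum_choose_mul_pow_of_norm_lt_one (by simpa using hw)).tsum_eq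
  have hsum_eq : ∑' k, Ring.choose a k * z ^ k = (1 + z) ^ a :=
    heq.of_subset_closure hseries hpow Metric.ball_subset_closedBall
      (closure_ball (0 : ℂ) one_ne_zero).ge (by simpa using hz)
  rw [← hsum_eq]
  exact (hs.of_norm_bounded fun k ↦ hbound k z (by simpa using hz)).hasSum

lemma hasSum_gcoef_mul_pow {α : ℝ} (h1 : 1 ≤ α) (h2 : α ≤ 2) {z : ℂ} (hz : ‖z‖ ≤ 1) :
    HasSum (fun k ↦ (gcoef α k : ℂ) * z ^ k) ((1 - z) ^ (α : ℂ)) := by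
  have hchoose (k : ℕ) : (gcoef α k : ℂ) * z ^ k = Ring.choose (α : ℂ) k * (-z) ^ k := by
    rw [gcoef_eq_neg_one_pow_mul_choose, neg_pow]
    push_cast [Complex.ofReal_choose]
    ring
  have hnorm (k : ℕ) : ‖Ring.choose (α : ℂ) k‖ = |gcoef α k| := by
    rw [← Complex.ofReal_choose, Complex.norm_real, Real.norm_eq_abs,
      gcoef_eq_neg_one_pow_mul_choose, abs_mul, abs_pow, abs_neg, abs_one, one_pow, one_mul]
  simp only [hchoose, sub_eq_add_neg]
  refine hasSum_choose_mul_pow_of_norm_le_one (by simp; linarith) ?_ (by rwa [norm_neg])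
  simpa only [hnorm] using summable_abs_gcoef h1 h2

lemma hasSum_wcoef_mul_pow {α : ℝ} (h1 : 1 ≤ α) (h2 : α ≤ 2) {z : ℂ} (hz : ‖z‖ ≤ 1) :
    HasSum (fun k ↦ (wcoef α k : ℂ) * z ^ k)
      ((α / 2 + (2 - α) / 2 * z) * (1 - z) ^ (α : ℂ)) := by
  have hg := hasSum_gcoef_mul_pow h1 h2 hz
  have htail := (hasSum_nat_add_iff' 1).mpr hg
  rw [← hasSum_nat_add_iff' 1]
  have hvalue : (α / 2 + (2 - α) / 2 * z) * (1 - z) ^ (α : ℂ)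
        - ∑ i ∈ range 1, (wcoef α i : ℂ) * z ^ i
      = α / 2 * ((1 - z) ^ (α : ℂ) - ∑ i ∈ range 1, (gcoef α i : ℂ) * z ^ i)
        + (2 - α) / 2 * z * (1 - z) ^ (α : ℂ) := by
    simp [wcoef, gcoef]
    ring
  rw [hvalue]
  refine ((htail.mul_left (α / 2 : ℂ)).add (hg.mul_left ((2 - α) / 2 * z))).congr_fun fun k ↦ ?_
  simp only [wcoef]
  push_cast
  ring

section ClosedForm

open Complex (I)

lemma genFun_eq {α : ℝ} (h1 : 1 ≤ α) (h2 : α ≤ 2) (x : ℝ) :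
    genFun α x = Complex.exp (-(x * I)) *
      ((α / 2 + (2 - α) / 2 * Complex.exp (x * I)) *
        (1 - Complex.exp (x * I)) ^ (α : ℂ)) := by
  have hz : ‖Complex.exp (x * I)‖ ≤ 1 := (Complex.norm_exp_ofReal_mul_I x).le
  rw [genFun, ← ((hasSum_wcoef_mul_pow h1 h2 hz).mul_left _).tsum_eq]
  congr 1 with k
  rw [← Complex.exp_nat_mul, mul_left_comm, ← Complex.exp_add]
  congr 2
  ring

lemma genFun_periodic (α : ℝ) : Function.Periodic (genFun α) (2 * π) := by
  intro x
  refine tsum_congr fun k ↦ ?_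
  have hshift : I * ((k : ℂ) - 1) * ((x + 2 * π : ℝ) : ℂ) =
      I * ((k : ℂ) - 1) * x + ((k - 1 : ℤ) : ℂ) * (2 * π * I) := by
    push_cast
    ring
  rw [hshift, Complex.exp_add, Complex.exp_int_mul_two_pi_mul_I, mul_one]

lemma ofReal_sin_mul_I (t : ℝ) :
    (sin t : ℂ) * I = (Complex.exp (t * I) - Complex.exp (-t * I)) / 2 := by
  rw [Complex.ofReal_sin, Complex.sin]
  linear_combination (Complex.exp (-t * I) - Complex.exp (t * I)) / 2 * Complex.I_sq

lemma one_sub_exp_two_mul_mul_I (t : ℝ) :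
    1 - Complex.exp ((2 * t : ℝ) * I)
      = (2 * sin t : ℝ) * Complex.exp ((t - π / 2 : ℝ) * I) := by
  have hinv : Complex.exp (t * I) * Complex.exp (-t * I) = 1 := by
    rw [← Complex.exp_add]; simp
  have hquarter : Complex.exp ((t - π / 2 : ℝ) * I) = -I * Complex.exp (t * I) := by
    rw [Complex.ofReal_sub, sub_mul, Complex.exp_sub, Complex.ofReal_div, Complex.ofReal_ofNat,
      Complex.exp_pi_div_two_mul_I, Complex.div_I]
    ring
  have hdouble : Complex.exp ((2 * t : ℝ) * I) = Complex.exp (t * I) ^ 2 := by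
    rw [← Complex.exp_nat_mul]; push_cast; ring_nf
  rw [hdouble, hquarter, Complex.ofReal_mul, Complex.ofReal_ofNat]
  linear_combination (-1 : ℂ) * hinv + 2 * Complex.exp (t * I) * ofReal_sin_mul_I t

lemma ofReal_mul_exp_mul_I_cpow {r θ : ℝ} (hr : 0 < r) (hθ₁ : -π < θ) (hθ₂ : θ ≤ π) (w : ℝ) :
    ((r : ℂ) * Complex.exp (θ * I)) ^ (w : ℂ) = (r ^ w : ℝ) * Complex.exp ((w * θ : ℝ) * I) := by
  have hpolar : (r : ℂ) * Complex.exp (θ * I) = Complex.exp (Real.log r + θ * I) := by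
    rw [Complex.exp_add, ← Complex.ofReal_exp, Real.exp_log hr]
  rw [hpolar, Complex.cpow_def_of_ne_zero (Complex.exp_ne_zero _), Complex.log_exp (by simpa)
    (by simpa), rpow_def_of_pos hr, Complex.ofReal_exp, ← Complex.exp_add]
  push_cast
  ring_nf

lemma neg_genFun_two_mul {α : ℝ} (h1 : 1 ≤ α) (h2 : α ≤ 2) {t : ℝ} (ht₀ : 0 < t) (htπ : t < π) :
    -genFun α (2 * t) = ((2 * sin t) ^ α : ℝ) *
      Complex.exp (((α - 1) * t + (2 - α) * (π / 2) : ℝ) * I) *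
      (cos t - ((α - 1) * sin t : ℝ) * I) := by
  have hsin : 0 < 2 * sin t := by linarith [sin_pos_of_pos_of_lt_pi ht₀ htπ]
  set E := Complex.exp (t * I)
  set E' := Complex.exp (-t * I)
  have hinv : E * E' = 1 := by rw [← Complex.exp_add]; simp
  have hcos : (cos t : ℂ) = (E + E') / 2 := by
    rw [Complex.ofReal_cos, Complex.cos]
  have hphase : Complex.exp (((α - 1) * t + (2 - α) * (π / 2) : ℝ) * I)
      = -(Complex.exp ((α * (t - π / 2) : ℝ) * I) * E') := by
    rw [← mul_neg_one, ← Complex.exp_pi_mul_I, ← Complex.exp_add, ← Complex.exp_add]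
    push_cast
    ring_nf
  have hdouble : Complex.exp ((2 * t : ℝ) * I) = E ^ 2 := by
    rw [← Complex.exp_nat_mul]; push_cast; ring_nf
  have hback : Complex.exp (-((2 * t : ℝ) * I)) = E' ^ 2 := by
    rw [← Complex.exp_nat_mul]; push_cast; ring_nf
  rw [genFun_eq h1 h2, one_sub_exp_two_mul_mul_I,
    ofReal_mul_exp_mul_I_cpow hsin (by linarith) (by linarith), hback, hdouble, hphase, hcos]
  set R : ℂ := (((2 * sin t) ^ α : ℝ) : ℂ)
  set X := Complex.exp ((α * (t - π / 2) : ℝ) * I)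
  simp only [Complex.ofReal_mul, Complex.ofReal_sub, Complex.ofReal_one]
  -- both sides are now polynomials in `E`, `E'`, equal modulo `E E' = 1`
  linear_combination (-R * X * (2 - α) / 2 * E * E') * hinv
    - R * X * E' * (α - 1) * ofReal_sin_mul_I t

lemma re_neg_genFun_two_mul {α t : ℝ} (h1 : 1 ≤ α) (h2 : α ≤ 2) (ht₀ : 0 < t) (htπ : t < π) :
    (-genFun α (2 * t)).re = (2 * sin t) ^ α *
      (cos ((α - 1) * t + (2 - α) * (π / 2)) * cos t
        + (α - 1) * sin ((α - 1) * t + (2 - α) * (π / 2)) * sin t) := by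
  rw [neg_genFun_two_mul h1 h2 ht₀ htπ]
  simp only [Complex.mul_re, Complex.mul_im, Complex.sub_re, Complex.sub_im, Complex.ofReal_re,
    Complex.ofReal_im, Complex.I_re, Complex.I_im, Complex.exp_ofReal_mul_I_re,
    Complex.exp_ofReal_mul_I_im]
  ring

lemma norm_genFun_two_mul {α t : ℝ} (h1 : 1 ≤ α) (h2 : α ≤ 2) (ht₀ : 0 < t) (htπ : t < π) :
    ‖genFun α (2 * t)‖ = (2 * sin t) ^ α * √(cos t ^ 2 + (α - 1) ^ 2 * sin t ^ 2) := by
  have hsin : 0 ≤ 2 * sin t := by linarith [sin_pos_of_pos_of_lt_pi ht₀ htπ]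
  rw [← norm_neg, neg_genFun_two_mul h1 h2 ht₀ htπ, norm_mul, norm_mul,
    Complex.norm_exp_ofReal_mul_I, mul_one, Complex.norm_real, norm_of_nonneg (by positivity),
    sub_eq_add_neg, ← neg_mul, ← Complex.ofReal_neg, Complex.norm_add_mul_I]
  ring_nf

end ClosedForm

section Trigonometric

variable {a t : ℝ}

lemma hasDerivAt_mul_sin_mul_cos_mul_sub (a t : ℝ) :
    HasDerivAt (fun t ↦ a * sin t * cos (a * t) - cos t * sin (a * t))
      ((1 - a ^ 2) * (sin t * sin (a * t))) t := by
  have hlin : HasDerivAt (fun t : ℝ ↦ a * t) a t := by simpa using (hasDerivAt_id t).const_mul a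
  have h := (((hasDerivAt_sin t).const_mul a).mul ((hasDerivAt_cos (a * t)).comp t hlin)).sub
    ((hasDerivAt_cos t).mul ((hasDerivAt_sin (a * t)).comp t hlin))
  refine h.congr_deriv ?_
  simp only [Function.comp_apply]
  ring

lemma cos_mul_sin_mul_le (ha₀ : 0 ≤ a) (ha₁ : a ≤ 1) (ht : t ∈ Icc 0 π) :
    cos t * sin (a * t) ≤ a * sin t * cos (a * t) := by
  have hmono : MonotoneOn (fun t ↦ a * sin t * cos (a * t) - cos t * sin (a * t)) (Icc 0 π) := by
    refine monotoneOn_of_hasDerivWithinAt_nonneg (convex_Icc 0 π) (by fun_prop)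
      (fun x _ ↦ (hasDerivAt_mul_sin_mul_cos_mul_sub a x).hasDerivWithinAt) fun x hx ↦ ?_
    rw [interior_Icc] at hx
    have hsin : 0 ≤ sin x := sin_nonneg_of_nonneg_of_le_pi hx.1.le hx.2.le
    have hsin_mul : 0 ≤ sin (a * x) :=
      sin_nonneg_of_nonneg_of_le_pi (by nlinarith [hx.1]) (by nlinarith [hx.1, hx.2])
    have : 0 ≤ 1 - a ^ 2 := by nlinarith
    positivity
  have := hmono ⟨le_rfl, pi_pos.le⟩ ht ht.1
  simp only [sin_zero, mul_zero, zero_mul, sub_zero] at this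
  linarith

lemma sq_sub_cos_sq_mul_eq (a t : ℝ) :
    (cos (a * t + (1 - a) * (π / 2)) * cos t + a * sin (a * t + (1 - a) * (π / 2)) * sin t) ^ 2
      - cos ((1 - a) * (π / 2)) ^ 2 * (cos t ^ 2 + a ^ 2 * sin t ^ 2)
      = (a * sin t * cos (a * t) - cos t * sin (a * t))
        * (a * sin (π - t) * cos (a * (π - t)) - cos (π - t) * sin (a * (π - t))) := by
  set c := (1 - a) * (π / 2)
  have hreflect : a * (π - t) = π - (a * t + c + c) := by ring
  rw [hreflect]
  simp only [sin_pi_sub, cos_pi_sub, cos_add, sin_add]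
  linear_combination
    (a ^ 2 * cos c ^ 2 * (sin (a * t) ^ 2 + cos (a * t) ^ 2 - 1)) * sin_sq_add_cos_sq t
    + (cos c ^ 2 * cos t ^ 2 + a ^ 2 * cos c ^ 2 - a ^ 2 * cos c ^ 2 * cos t ^ 2)
      * sin_sq_add_cos_sq (a * t)

lemma cos_mul_cos_add_mul_sin_mul_sin_nonneg (ha₀ : 0 ≤ a) (ha₁ : a ≤ 1)
    (ht : t ∈ Icc 0 π) :
    0 ≤ cos (a * t + (1 - a) * (π / 2)) * cos t + a * sin (a * t + (1 - a) * (π / 2)) * sin t := by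
  set u := a * t + (1 - a) * (π / 2)
  have hsplit : cos u * cos t + a * sin u * sin t
      = a * cos ((1 - a) * (π / 2 - t)) + (1 - a) * (cos u * cos t) := by
    rw [show (1 - a) * (π / 2 - t) = u - t by ring, cos_sub]
    ring
  -- `u - π / 2 = a (t - π / 2)`, so `cos u` and `cos t` change sign together at `t = π / 2`.
  have hu : u - π / 2 = a * (t - π / 2) := by ring
  have hcos : 0 ≤ cos ((1 - a) * (π / 2 - t)) := by
    apply cos_nonneg_of_neg_pi_div_two_le_of_le <;> nlinarith [ht.1, ht.2, pi_pos]
  have hprod : 0 ≤ cos u * cos t := by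
    rcases le_total t (π / 2) with h | h
    · exact mul_nonneg (cos_nonneg_of_neg_pi_div_two_le_of_le (by nlinarith [ht.1, pi_pos])
        (by nlinarith)) (cos_nonneg_of_neg_pi_div_two_le_of_le (by linarith [ht.1]) h)
    · exact mul_nonneg_of_nonpos_of_nonpos
        (cos_nonpos_of_pi_div_two_le_of_le (by nlinarith) (by nlinarith [ht.2, pi_pos]))
        (cos_nonpos_of_pi_div_two_le_of_le h (by linarith [ht.2, pi_pos]))
  rw [hsplit]
  have : 0 ≤ 1 - a := by linarith
  positivity

lemma cos_mul_sqrt_le (ha₀ : 0 ≤ a) (ha₁ : a ≤ 1) (ht : t ∈ Icc 0 π) :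
    cos ((1 - a) * (π / 2)) * √(cos t ^ 2 + a ^ 2 * sin t ^ 2)
      ≤ cos (a * t + (1 - a) * (π / 2)) * cos t + a * sin (a * t + (1 - a) * (π / 2)) * sin t := by
  have hc : 0 ≤ cos ((1 - a) * (π / 2)) :=
    cos_nonneg_of_neg_pi_div_two_le_of_le (by nlinarith [pi_pos]) (by nlinarith [pi_pos])
  have hreflect : π - t ∈ Icc 0 π := ⟨by linarith [ht.2], by linarith [ht.1]⟩
  have hdefect := sq_sub_cos_sq_mul_eq a t
  have hB := cos_mul_sin_mul_le ha₀ ha₁ ht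
  have hB' := cos_mul_sin_mul_le ha₀ ha₁ hreflect
  rw [← sqrt_sq hc, ← sqrt_mul (sq_nonneg _), sqrt_le_iff]
  refine ⟨cos_mul_cos_add_mul_sin_mul_sin_nonneg ha₀ ha₁ ht, ?_⟩
  nlinarith [mul_nonneg (sub_nonneg.mpr hB) (sub_nonneg.mpr hB')]

end Trigonometric

lemma genFun_zero {α : ℝ} (h1 : 1 ≤ α) (h2 : α ≤ 2) : genFun α 0 = 0 := by
  rw [genFun_eq h1 h2]
  simp [Complex.zero_cpow (Complex.ofReal_ne_zero.mpr (by linarith : α ≠ 0))]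

lemma cos_mul_norm_genFun_le {α : ℝ} (h1 : 1 ≤ α) (h2 : α ≤ 2) (x : ℝ) :
    cos ((2 - α) * (π / 2)) * ‖genFun α x‖ ≤ (-genFun α x).re := by
  obtain ⟨y, ⟨hy₀, hy₂π⟩, hxy⟩ := (genFun_periodic α).exists_mem_Ico₀ two_pi_pos x
  rw [hxy]
  rcases hy₀.eq_or_lt with rfl | hy₀
  · simp [genFun_zero h1 h2]
  obtain ⟨t, rfl⟩ : ∃ t, y = 2 * t := ⟨y / 2, by ring⟩
  have ht₀ : 0 < t := by linarith
  have htπ : t < π := by linarith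
  have htrig := cos_mul_sqrt_le (a := α - 1) (by linarith) (by linarith) ⟨ht₀.le, htπ.le⟩
  rw [show 1 - (α - 1) = 2 - α by ring] at htrig
  rw [re_neg_genFun_two_mul h1 h2 ht₀ htπ, norm_genFun_two_mul h1 h2 ht₀ htπ, mul_left_comm]
  have hsin : 0 < 2 * sin t := by linarith [sin_pos_of_pos_of_lt_pi ht₀ htπ]
  exact mul_le_mul_of_nonneg_left htrig (by positivity)

lemma isGLB_re_neg_genFun_div_norm {α : ℝ} (h1 : 1 ≤ α) (h2 : α ≤ 2) :
    IsGLB {r : ℝ | ∃ x : ℝ, genFun α x ≠ 0 ∧ r = (-(genFun α x)).re / ‖genFun α x‖}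
      (cos ((2 - α) * (π / 2))) := by
  refine ⟨?_, fun b hb ↦ ?_⟩
  · rintro r ⟨x, hx, rfl⟩
    rw [le_div_iff₀ (norm_pos_iff.mpr hx)]
    exact cos_mul_norm_genFun_le h1 h2 x
  set ratio : ℝ → ℝ := fun t ↦
    (cos ((α - 1) * t + (2 - α) * (π / 2)) * cos t
      + (α - 1) * sin ((α - 1) * t + (2 - α) * (π / 2)) * sin t)
      / √(cos t ^ 2 + (α - 1) ^ 2 * sin t ^ 2)
  have hlim : Tendsto ratio (𝓝[>] 0) (𝓝 (cos ((2 - α) * (π / 2)))) := by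
    have hcont : ContinuousAt ratio 0 := by
      refine ContinuousAt.div (by fun_prop) (by fun_prop) (by simp)
    simpa [ratio] using hcont.tendsto.mono_left nhdsWithin_le_nhds
  refine ge_of_tendsto hlim ?_
  filter_upwards [Ioo_mem_nhdsGT (half_pos pi_pos)] with t ⟨ht₀, ht⟩
  have htπ : t < π := by linarith [pi_pos]
  have hsin : 0 < 2 * sin t := by linarith [sin_pos_of_pos_of_lt_pi ht₀ htπ]
  have hsqrt : 0 < √(cos t ^ 2 + (α - 1) ^ 2 * sin t ^ 2) := by
    have := cos_pos_of_mem_Ioo ⟨by linarith, ht⟩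
    positivity
  have hnorm := norm_genFun_two_mul h1 h2 ht₀ htπ
  refine hb ⟨2 * t, fun h ↦ ?_, ?_⟩
  · rw [h, norm_zero] at hnorm
    have : 0 < (2 * sin t) ^ α * √(cos t ^ 2 + (α - 1) ^ 2 * sin t ^ 2) := by positivity
    linarith
  · rw [re_neg_genFun_two_mul h1 h2 ht₀ htπ, hnorm, mul_div_mul_left _ _ (by positivity)]

/-- The infimum over all real `x` with `g(α,x) ≠ 0` of `Re(-g(α,x))/|g(α,x)|` equals
`|cos(απ/2)|`; in particular `Re(-g(α,x)) ≥ |cos(απ/2)|·|g(α,x)|` for every real `x`. -/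
theorem genFun_ratio_inf (α : ℝ) (hα : α ∈ Set.Ioo (1 : ℝ) 2) :
    IsGLB {r : ℝ | ∃ x : ℝ, genFun α x ≠ 0 ∧
        r = (-(genFun α x)).re / ‖genFun α x‖}
      |Real.cos (α * Real.pi / 2)| ∧
    ∀ x : ℝ, |Real.cos (α * Real.pi / 2)| * ‖genFun α x‖ ≤ (-(genFun α x)).re := by
  obtain ⟨h1, h2⟩ := hα
  have habs : |cos (α * π / 2)| = cos ((2 - α) * (π / 2)) := by
    rw [show α * π / 2 = π - (2 - α) * (π / 2) by ring, cos_pi_sub, abs_neg,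
      abs_of_nonneg (cos_nonneg_of_neg_pi_div_two_le_of_le (by nlinarith [pi_pos])
        (by nlinarith [pi_pos]))]
  rw [habs]
  exact ⟨isGLB_re_neg_genFun_div_norm h1.le h2.le, cos_mul_norm_genFun_le h1.le h2.le⟩
end

section
/- Let T > 0, let N be a positive integer with τ = T/N ≤ 1, let x_L < x_R, let M be a positive integer with h = (x_R − x_L)/(M+1), and let D = diag(d_1,…,d_M) with 0 < d_− ≤ d_i ≤ d_+ for all i. Suppose vectors e^0 = 0, e^1, …, e^N ∈ ℝ^M and R^{1/2}, …, R^{N−1/2} ∈ ℝ^M satisfy, for n = 1,…,N, (e^n − e^{n−1})/τ = (1/(2h^α))·D·G_α·(e^{n−1} + e^n) + R^{n−1/2}, and that |R_i^{n−1/2}| ≤ c_1·(τ² + h²) for all 1 ≤ i ≤ M, 1 ≤ n ≤ N, where c_1 > 0. Then for every n = 1,…,N: ‖e^n‖ ≤ c_1·√((exp(2T) − 1)·(x_R − x_L)·d_+/d_−)·(τ² + h²), where ‖v‖ = √(h·vᵀv) is the discrete L² norm. -/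
open Matrix

/-- The `M × M` lower-Hessenberg Toeplitz matrix `G_α`. -/
noncomputable def Gmat (α : ℝ) (M : ℕ) : Matrix (Fin M) (Fin M) ℝ :=
  Matrix.of fun i j => if (j : ℕ) ≤ (i : ℕ) + 1 then wcoef α ((i : ℕ) + 1 - (j : ℕ)) else 0

open Finset

noncomputable def gsum (α : ℝ) (m : ℕ) : ℝ := ∑ k ∈ Finset.range (m+1), gcoef α k

lemma gsum_succ (α : ℝ) (m : ℕ) : gsum α (m+1) = gsum α m + gcoef α (m+1) := by
  rw [gsum, Finset.sum_range_succ]; rfl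

lemma gcoef_succ_eq (α : ℝ) : ∀ m : ℕ, gcoef α (m+1) = (-α/((m:ℝ)+1)) * gsum α m
  | 0 => by
      simp [gcoef, gsum]
  | (m+1) => by
      have ih := gcoef_succ_eq α m
      have hm1 : ((m:ℝ)+1) ≠ 0 := by positivity
      have hm2 : ((m:ℝ)+1+1) ≠ 0 := by positivity
      rw [gsum_succ, ih]
      show (1 - (α + 1) / ((m:ℕ)+1+1 : ℕ)) * gcoef α (m+1) = _
      rw [ih]
      push_cast
      field_simp
      ring

lemma gsum_succ_eq (α : ℝ) (m : ℕ) :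
    gsum α (m+1) = (1 - α/((m:ℝ)+1)) * gsum α m := by
  rw [gsum_succ, gcoef_succ_eq]; ring

lemma gsum_nonpos (hα1 : 1 < α) (hα2 : α < 2) : ∀ m : ℕ, 1 ≤ m → gsum α m ≤ 0 := by
  intro m hm
  induction m with
  | zero => omega
  | succ m ih =>
    rcases Nat.eq_or_lt_of_le hm with h | h
    · have h0 : m = 0 := by omega
      subst h0
      have h1 : gsum α 0 = 1 := by simp [gsum, gcoef]
      rw [gsum_succ_eq, h1]
      push_cast
      nlinarith
    · have hm' : 1 ≤ m := by omega
      have h1 : gsum α m ≤ 0 := ih hm'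
      rw [gsum_succ_eq]
      have : 0 ≤ 1 - α/((m:ℝ)+1) := by
        have : (2:ℝ) ≤ (m:ℝ)+1 := by exact_mod_cast Nat.succ_le_succ hm'
        have hd : α/((m:ℝ)+1) ≤ 1 := by
          rw [div_le_one (by linarith)]
          linarith
        linarith
      nlinarith

example (α : ℝ) : gcoef α 1 = -α := by simp [gcoef]

lemma gcoef_nonneg (hα1 : 1 < α) (hα2 : α < 2) (k : ℕ) (hk : 2 ≤ k) : 0 ≤ gcoef α k := by
  obtain ⟨m, rfl⟩ : ∃ m, k = m + 1 := ⟨k-1, by omega⟩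
  rw [gcoef_succ_eq]
  have h1 : gsum α m ≤ 0 := gsum_nonpos hα1 hα2 m (by omega)
  have h2 : -α/((m:ℝ)+1) ≤ 0 := by
    apply div_nonpos_of_nonpos_of_nonneg <;> [linarith; positivity]
  nlinarith

lemma gcoef_two (α : ℝ) : gcoef α 2 = (1 - (α+1)/2) * (-α) := by
  show (1 - (α + 1) / ((1:ℕ)+1 : ℕ)) * gcoef α 1 = _
  simp [gcoef]

lemma wcoef_zero (α : ℝ) : wcoef α 0 = α / 2 := by simp [wcoef, gcoef]

lemma wcoef_one_nonpos (hα1 : 1 < α) (hα2 : α < 2) : wcoef α 1 ≤ 0 := by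
  show α / 2 * gcoef α 1 + (2 - α) / 2 * gcoef α 0 ≤ 0
  have h : gcoef α 1 = -α := by simp [gcoef]
  have h0 : gcoef α 0 = 1 := rfl
  rw [h, h0]
  nlinarith

lemma wcoef_zero_add_two (hα1 : 1 < α) (hα2 : α < 2) : 0 ≤ wcoef α 0 + wcoef α 2 := by
  have h2 : wcoef α 2 = α / 2 * gcoef α 2 + (2 - α) / 2 * gcoef α 1 := rfl
  have h1 : gcoef α 1 = -α := by simp [gcoef]
  rw [wcoef_zero, h2, gcoef_two, h1]
  nlinarith [mul_nonneg (show (0:ℝ) ≤ α by linarith) (show (0:ℝ) ≤ α*α + α - 2 by nlinarith)]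

lemma wcoef_nonneg (hα1 : 1 < α) (hα2 : α < 2) (k : ℕ) (hk : 3 ≤ k) : 0 ≤ wcoef α k := by
  obtain ⟨m, rfl⟩ : ∃ m, k = m + 1 := ⟨k-1, by omega⟩
  show 0 ≤ α / 2 * gcoef α (m+1) + (2 - α) / 2 * gcoef α m
  have h1 := gcoef_nonneg hα1 hα2 (m+1) (by omega)
  have h2 := gcoef_nonneg hα1 hα2 m (by omega)
  nlinarith

noncomputable def wsum (α : ℝ) (m : ℕ) : ℝ := ∑ k ∈ Finset.range (m+1), wcoef α k

lemma wsum_succ (α : ℝ) (m : ℕ) : wsum α (m+1) = wsum α m + wcoef α (m+1) := by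
  rw [wsum, Finset.sum_range_succ]; rfl

lemma wsum_eq (α : ℝ) : ∀ m : ℕ, wsum α (m+1) = α/2 * gsum α (m+1) + (2-α)/2 * gsum α m
  | 0 => by
      simp [wsum, gsum, Finset.sum_range_succ, wcoef, gcoef]
      ring
  | (m+1) => by
      have h : wcoef α (m+1+1) = α / 2 * gcoef α (m+1+1) + (2 - α) / 2 * gcoef α (m+1) := rfl
      rw [wsum_succ, wsum_eq α m, h, gsum_succ α (m+1), gsum_succ α m]
      ring

lemma wsum_nonpos (hα1 : 1 < α) (hα2 : α < 2) (m : ℕ) (hm : 2 ≤ m) : wsum α m ≤ 0 := by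
  obtain ⟨p, rfl⟩ : ∃ p, m = p + 1 := ⟨m-1, by omega⟩
  rw [wsum_eq]
  have h1 : gsum α (p+1) ≤ 0 := gsum_nonpos hα1 hα2 _ (by omega)
  have h2 : gsum α p ≤ 0 := gsum_nonpos hα1 hα2 _ (by omega)
  nlinarith

lemma sum_ite_w (α : ℝ) (m a : ℕ) (ham : a < m) :
    ∑ j ∈ Finset.range m, (if j ≤ a then wcoef α (a - j) else 0) = wsum α a := by
  rw [← Finset.sum_subset (Finset.range_subset_range.2 (by omega) : Finset.range (a+1) ⊆ Finset.range m)
    (by intro x _ hnx; rw [if_neg]; simp at hnx; omega)]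
  have h1 : ∀ j ∈ Finset.range (a+1), (if j ≤ a then wcoef α (a - j) else 0) = wcoef α (a - j) := by
    intro j hj; rw [if_pos]; simp at hj; omega
  rw [Finset.sum_congr rfl h1]
  have h2 := Finset.sum_range_reflect (wcoef α) (a+1)
  simpa [wsum, Nat.add_sub_cancel] using h2

lemma sum_ite_w_full (α : ℝ) (m : ℕ) (hm : 1 ≤ m) :
    ∑ j ∈ Finset.range m, (if j ≤ m then wcoef α (m - j) else 0) = wsum α m - wcoef α 0 := by
  have h1 : ∀ j ∈ Finset.range m, (if j ≤ m then wcoef α (m - j) else 0)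
      = (fun j => wcoef α (j+1)) (m - 1 - j) := by
    intro j hj; simp only [Finset.mem_range] at hj; rw [if_pos (by omega)]
    show wcoef α (m - j) = wcoef α (m - 1 - j + 1)
    congr 1; omega
  rw [Finset.sum_congr rfl h1, Finset.sum_range_reflect (fun j => wcoef α (j+1)) m]
  have h2 : wsum α m = (∑ j ∈ Finset.range m, wcoef α (j+1)) + wcoef α 0 := by
    rw [wsum, Finset.sum_range_succ']
  rw [h2]; ring

lemma row_sum (α : ℝ) (M : ℕ) (i : Fin M) :
    ∑ j, Gmat α M i j = wsum α ((i:ℕ)+1) - (if (i:ℕ)+1 = M then wcoef α 0 else 0) := by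
  have h0 : ∑ j, Gmat α M i j
      = ∑ j ∈ Finset.range M, (if j ≤ (i:ℕ)+1 then wcoef α ((i:ℕ)+1-j) else 0) := by
    rw [← Fin.sum_univ_eq_sum_range (fun j => if j ≤ (i:ℕ)+1 then wcoef α ((i:ℕ)+1-j) else 0) M]
    rfl
  rw [h0]
  by_cases hc : (i:ℕ)+1 = M
  · rw [if_pos hc, hc, sum_ite_w_full α M (by omega)]
  · rw [if_neg hc, sub_zero, sum_ite_w α M ((i:ℕ)+1) (by omega)]

lemma col_sum (α : ℝ) (M : ℕ) (i : Fin M) :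
    ∑ j, Gmat α M j i =
      if (i:ℕ) = 0 then wsum α M - wcoef α 0 else wsum α (M - (i:ℕ)) := by
  have h0 : ∑ j, Gmat α M j i
      = ∑ j ∈ Finset.range M, (if (i:ℕ) ≤ j+1 then wcoef α (j+1-(i:ℕ)) else 0) := by
    rw [← Fin.sum_univ_eq_sum_range (fun j => if (i:ℕ) ≤ j+1 then wcoef α (j+1-(i:ℕ)) else 0) M]
    rfl
  have hiM : (i:ℕ) < M := i.isLt
  rw [h0]
  by_cases hc : (i:ℕ) = 0
  · rw [if_pos hc]
    have h1 : ∀ j ∈ Finset.range M, (if (i:ℕ) ≤ j+1 then wcoef α (j+1-(i:ℕ)) else 0)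
        = wcoef α (j+1) := by
      intro j _; rw [if_pos (by omega)]; congr 1; omega
    rw [Finset.sum_congr rfl h1]
    have h2 : wsum α M = (∑ j ∈ Finset.range M, wcoef α (j+1)) + wcoef α 0 := by
      rw [wsum, Finset.sum_range_succ']
    rw [h2]; ring
  · rw [if_neg hc]
    have h1 : ∀ j ∈ Finset.range M,
        (fun j => if (i:ℕ) ≤ j+1 then wcoef α (j+1-(i:ℕ)) else 0) (M - 1 - j)
        = (if j ≤ M - (i:ℕ) then wcoef α (M - (i:ℕ) - j) else 0) := by
      intro j hj; simp only [Finset.mem_range] at hj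
      show (if (i:ℕ) ≤ (M-1-j)+1 then wcoef α ((M-1-j)+1-(i:ℕ)) else 0)
          = (if j ≤ M - (i:ℕ) then wcoef α (M - (i:ℕ) - j) else 0)
      by_cases h : (i:ℕ) + j ≤ M
      · rw [if_pos (by omega), if_pos (by omega)]
        congr 1; omega
      · rw [if_neg (by omega), if_neg (by omega)]
    rw [← Finset.sum_range_reflect (fun j => if (i:ℕ) ≤ j+1 then wcoef α (j+1-(i:ℕ)) else 0) M,
      Finset.sum_congr rfl h1, sum_ite_w α M (M - (i:ℕ)) (by omega)]

lemma rowcol_nonpos (hα1 : 1 < α) (hα2 : α < 2) (M : ℕ) (i : Fin M) :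
    (∑ j, Gmat α M i j) + (∑ j, Gmat α M j i) ≤ 0 := by
  have hiM : (i:ℕ) < M := i.isLt
  rw [row_sum, col_sum]
  have hw1 : wsum α 1 = wcoef α 0 + wcoef α 1 := by
    simp [wsum, Finset.sum_range_succ, wsum]
  have hw1n := wcoef_one_nonpos hα1 hα2
  by_cases h1 : M = 1
  · subst h1
    have hi0 : (i:ℕ) = 0 := by omega
    rw [if_pos (by omega), if_pos hi0, hi0]
    norm_num [hw1]
    linarith
  · have hM2 : 2 ≤ M := by omega
    have hwM := wsum_nonpos hα1 hα2 M hM2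
    by_cases hi0 : (i:ℕ) = 0
    · rw [if_neg (by omega), if_pos hi0, hi0, sub_zero]
      norm_num [hw1]
      linarith
    · by_cases hiM1 : (i:ℕ)+1 = M
      · rw [if_pos hiM1, if_neg hi0]
        have hMi : M - (i:ℕ) = 1 := by omega
        rw [hMi, hw1, hiM1]
        linarith
      · rw [if_neg hiM1, if_neg hi0, sub_zero]
        have hA := wsum_nonpos hα1 hα2 ((i:ℕ)+1) (by omega)
        have hB := wsum_nonpos hα1 hα2 (M - (i:ℕ)) (by omega)
        linarith

lemma offdiag_nonneg (hα1 : 1 < α) (hα2 : α < 2) (M : ℕ) (i j : Fin M) (hij : i ≠ j) :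
    0 ≤ Gmat α M i j + Gmat α M j i := by
  have key : ∀ a b : ℕ, b < a →
      0 ≤ (if b ≤ a+1 then wcoef α (a+1-b) else 0) + (if a ≤ b+1 then wcoef α (b+1-a) else 0) := by
    intro a b hba
    rw [if_pos (by omega)]
    by_cases h : a ≤ b+1
    · rw [if_pos h]
      have e1 : a+1-b = 2 := by omega
      have e2 : b+1-a = 0 := by omega
      rw [e1, e2]
      linarith [wcoef_zero_add_two hα1 hα2]
    · rw [if_neg h, add_zero]
      exact wcoef_nonneg hα1 hα2 _ (by omega)
  have hG : ∀ a b : Fin M, Gmat α M a b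
      = if (b:ℕ) ≤ (a:ℕ)+1 then wcoef α ((a:ℕ)+1-(b:ℕ)) else 0 := fun a b => rfl
  rw [hG, hG]
  have hne : (i:ℕ) ≠ (j:ℕ) := fun h => hij (Fin.ext h)
  rcases lt_or_gt_of_ne hne with h | h
  · linarith [key (j:ℕ) (i:ℕ) h]
  · exact key (i:ℕ) (j:ℕ) h

lemma quad_nonpos (hα1 : 1 < α) (hα2 : α < 2) (M : ℕ) (v : Fin M → ℝ) :
    v ⬝ᵥ (Gmat α M *ᵥ v) ≤ 0 := by
  set A := Gmat α M with hA
  have hexp : v ⬝ᵥ (A *ᵥ v) = ∑ i, ∑ j, A i j * (v i * v j) := by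
    simp only [dotProduct, mulVec, Finset.mul_sum]
    apply Finset.sum_congr rfl; intro i _
    apply Finset.sum_congr rfl; intro j _
    ring
  have hexp2 : v ⬝ᵥ (A *ᵥ v) = ∑ i, ∑ j, A j i * (v i * v j) := by
    rw [hexp, Finset.sum_comm]
    apply Finset.sum_congr rfl; intro i _
    apply Finset.sum_congr rfl; intro j _
    ring
  have h2 : 2 * (v ⬝ᵥ (A *ᵥ v)) = ∑ i, ∑ j, (A i j + A j i) * (v i * v j) := by
    rw [two_mul]
    nth_rewrite 1 [hexp]
    rw [hexp2, ← Finset.sum_add_distrib]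
    apply Finset.sum_congr rfl; intro i _
    rw [← Finset.sum_add_distrib]
    apply Finset.sum_congr rfl; intro j _
    ring
  have hbound : ∑ i, ∑ j, (A i j + A j i) * (v i * v j)
      ≤ ∑ i, ∑ j, (A i j + A j i) * ((v i)^2 + (v j)^2) / 2 := by
    apply Finset.sum_le_sum; intro i _
    apply Finset.sum_le_sum; intro j _
    by_cases hij : i = j
    · subst hij; apply le_of_eq; ring
    · have hS : 0 ≤ A i j + A j i := offdiag_nonneg hα1 hα2 M i j hij
      nlinarith [sq_nonneg (v i - v j)]
  have heq2 : ∑ i, ∑ j, (A i j + A j i) * ((v i)^2 + (v j)^2) / 2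
      = ∑ i, (v i)^2 * ((∑ j, A i j) + (∑ j, A j i)) := by
    have swap : ∑ i, ∑ j, (A i j + A j i) * (v j)^2 / 2
        = ∑ i, ∑ j, (A i j + A j i) * (v i)^2 / 2 := by
      rw [Finset.sum_comm]
      apply Finset.sum_congr rfl; intro i _
      apply Finset.sum_congr rfl; intro j _
      ring
    calc ∑ i, ∑ j, (A i j + A j i) * ((v i)^2 + (v j)^2) / 2
        = ∑ i, ((∑ j, (A i j + A j i) * (v i)^2 / 2) + ∑ j, (A i j + A j i) * (v j)^2 / 2) := by
          apply Finset.sum_congr rfl; intro i _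
          rw [← Finset.sum_add_distrib]
          apply Finset.sum_congr rfl; intro j _
          ring
      _ = (∑ i, ∑ j, (A i j + A j i) * (v i)^2 / 2) + ∑ i, ∑ j, (A i j + A j i) * (v j)^2 / 2 := by
          rw [Finset.sum_add_distrib]
      _ = ∑ i, ∑ j, ((A i j + A j i) * (v i)^2 / 2 + (A i j + A j i) * (v i)^2 / 2) := by
          rw [swap, ← Finset.sum_add_distrib]
          apply Finset.sum_congr rfl; intro i _
          rw [Finset.sum_add_distrib]
      _ = ∑ i, (v i)^2 * ((∑ j, A i j) + (∑ j, A j i)) := by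
          apply Finset.sum_congr rfl; intro i _
          have hterm : ∀ j, (A i j + A j i) * (v i)^2 / 2 + (A i j + A j i) * (v i)^2 / 2
              = A i j * (v i)^2 + A j i * (v i)^2 := fun j => by ring
          simp_rw [hterm]
          rw [Finset.sum_add_distrib, ← Finset.sum_mul, ← Finset.sum_mul]
          ring
  have hfinal : ∑ i, (v i)^2 * ((∑ j, A i j) + (∑ j, A j i)) ≤ 0 := by
    apply Finset.sum_nonpos
    intro i _
    exact mul_nonpos_of_nonneg_of_nonpos (sq_nonneg _) (rowcol_nonpos hα1 hα2 M i)
  linarith [h2, hbound, heq2 ▸ hbound]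


set_option maxHeartbeats 1000000 in
/-- Convergence estimate (Theorem 2.2): if the errors `eⁿ` satisfy the Crank–Nicolson/WSGD
error equation with truncation errors `Rⁿ⁻¹ᐟ²` bounded entrywise by `c₁(τ² + h²)`, then
`‖eⁿ‖ ≤ c₁ √((e^{2T} − 1)(x_R − x_L) d₊/d₋) (τ² + h²)` in the discrete L² norm
`‖v‖ = √(h vᵀv)`, where `τ = T/N` and `h = (x_R − x_L)/(M+1)`. -/
theorem CN_scheme_convergence (α T : ℝ) (hα : α ∈ Set.Ioo (1 : ℝ) 2) (hT : 0 < T)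
    (N M : ℕ) (hN : 0 < N) (hM : 0 < M) (hτ : T / N ≤ 1)
    (xL xR : ℝ) (hx : xL < xR)
    (dminus dplus : ℝ) (hdminus : 0 < dminus)
    (d : Fin M → ℝ) (hd : ∀ i, dminus ≤ d i ∧ d i ≤ dplus)
    (c₁ : ℝ) (hc₁ : 0 < c₁)
    (e R : ℕ → Fin M → ℝ) (he0 : e 0 = 0)
    (heq : ∀ n, 1 ≤ n → n ≤ N →
      (1 / (T / N)) • (e n - e (n - 1)) =
        (1 / (2 * ((xR - xL) / (M + 1)) ^ α)) •
          (Matrix.diagonal d *ᵥ (Gmat α M *ᵥ (e (n - 1) + e n))) + R n)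
    (hR : ∀ n, 1 ≤ n → n ≤ N → ∀ i : Fin M,
      |R n i| ≤ c₁ * ((T / N) ^ 2 + ((xR - xL) / (M + 1)) ^ 2)) :
    ∀ n, 1 ≤ n → n ≤ N →
      Real.sqrt (((xR - xL) / (M + 1)) * (e n ⬝ᵥ e n)) ≤
        c₁ * Real.sqrt ((Real.exp (2 * T) - 1) * (xR - xL) * dplus / dminus) *
          ((T / N) ^ 2 + ((xR - xL) / (M + 1)) ^ 2) := by
  obtain ⟨hα1, hα2⟩ := hα
  set τ : ℝ := T / N with hτdef
  set h : ℝ := (xR - xL) / (M + 1) with hhdef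
  have hNpos : (0:ℝ) < N := by exact_mod_cast hN
  have hτpos : 0 < τ := by rw [hτdef]; positivity
  have hhpos : 0 < h := by rw [hhdef]; apply div_pos (by linarith) (by positivity)
  have hτN : τ * N = T := by rw [hτdef]; field_simp
  have hdpos : ∀ i, 0 < d i := fun i => lt_of_lt_of_le hdminus (hd i).1
  have hdplus : 0 < dplus := lt_of_lt_of_le (hdpos ⟨0, hM⟩) (hd ⟨0, hM⟩).2
  set c : ℝ := 1 / (2 * h ^ α) with hcdef
  have hcpos : 0 < c := by
    rw [hcdef]
    have : (0:ℝ) < h ^ α := Real.rpow_pos_of_pos hhpos α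
    positivity
  set Φ : ℕ → ℝ := fun n => ∑ i, (e n i)^2 / d i with hΦ
  have hΦ0 : Φ 0 = 0 := by simp [hΦ, he0]
  have hΦnn : ∀ n, 0 ≤ Φ n :=
    fun n => Finset.sum_nonneg fun i _ => div_nonneg (sq_nonneg _) (hdpos i).le
  set B : ℝ := M * (c₁ * (τ^2 + h^2))^2 / dminus with hB
  have hBnn : 0 ≤ B := by rw [hB]; positivity
  clear_value τ h c Φ B
  have key : ∀ n : ℕ, 1 ≤ n → n ≤ N →
      (1 - τ/2) * Φ n ≤ (1 + τ/2) * Φ (n-1) + τ * B := by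
    intro n hn1 hnN
    have heqn := heq n hn1 hnN
    set w : Fin M → ℝ := e (n-1) + e n with hw
    have hτne : τ ≠ 0 := ne_of_gt hτpos
    have hpt : ∀ i, e n i - e (n-1) i
        = τ * (c * (d i * (Gmat α M *ᵥ w) i) + R n i) := by
      intro i
      have h1 := congrFun heqn i
      simp only [Pi.smul_apply, Pi.sub_apply, Pi.add_apply, smul_eq_mul,
        Matrix.mulVec_diagonal, one_div] at h1
      rw [inv_mul_eq_iff_eq_mul₀ hτne] at h1
      exact h1
    have hsum : Φ n - Φ (n-1)
        = τ * c * (w ⬝ᵥ (Gmat α M *ᵥ w)) + τ * ∑ i, R n i * w i / d i := by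
      have hterm : ∀ i : Fin M, (e n i)^2 / d i - (e (n-1) i)^2 / d i
          = τ * c * ((Gmat α M *ᵥ w) i * w i) + τ * (R n i * w i / d i) := by
        intro i
        have hd' : d i ≠ 0 := ne_of_gt (hdpos i)
        have h1 := hpt i
        have hwi : w i = e (n-1) i + e n i := rfl
        have h2 : (e n i)^2 / d i - (e (n-1) i)^2 / d i
            = (τ * (c * (d i * (Gmat α M *ᵥ w) i) + R n i)) * w i / d i := by
          rw [hwi, ← h1]; ring
        rw [h2, hwi]
        field_simp
      have hdp : w ⬝ᵥ (Gmat α M *ᵥ w) = ∑ i, (Gmat α M *ᵥ w) i * w i := by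
        rw [dotProduct]
        exact Finset.sum_congr rfl fun i _ => mul_comm _ _
      calc Φ n - Φ (n-1) = ∑ i, ((e n i)^2 / d i - (e (n-1) i)^2 / d i) := by
            simp only [hΦ]
            rw [Finset.sum_sub_distrib]
        _ = ∑ i, (τ * c * ((Gmat α M *ᵥ w) i * w i) + τ * (R n i * w i / d i)) :=
            Finset.sum_congr rfl fun i _ => hterm i
        _ = τ * c * (w ⬝ᵥ (Gmat α M *ᵥ w)) + τ * ∑ i, R n i * w i / d i := by
            rw [Finset.sum_add_distrib, ← Finset.mul_sum, ← Finset.mul_sum, hdp]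
    have hquad : τ * c * (w ⬝ᵥ (Gmat α M *ᵥ w)) ≤ 0 :=
      mul_nonpos_of_nonneg_of_nonpos (by positivity) (quad_nonpos hα1 hα2 M w)
    have hRb : ∀ i : Fin M, R n i * w i / d i
        ≤ (c₁*(τ^2+h^2))^2 / dminus + ((e (n-1) i)^2/d i + (e n i)^2/d i)/2 := by
      intro i
      have hRi := hR n hn1 hnN i
      have hdi := hdpos i
      have hwi : w i = e (n-1) i + e n i := rfl
      have h3 : (R n i)^2 ≤ (c₁*(τ^2+h^2))^2 := by
        have h5 : |R n i| ≤ c₁*(τ^2+h^2) := by rw [mul_add] at hRi ⊢; exact hRi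
        nlinarith [abs_nonneg (R n i), sq_abs (R n i)]
      have h1 : R n i * w i ≤ (R n i)^2 + ((e (n-1) i)^2 + (e n i)^2)/2 := by
        rw [hwi]
        nlinarith [sq_nonneg (R n i - (e (n-1) i + e n i)/2),
          sq_nonneg (e (n-1) i - e n i)]
      calc R n i * w i / d i ≤ ((c₁*(τ^2+h^2))^2 + ((e (n-1) i)^2 + (e n i)^2)/2) / d i := by
            apply (div_le_div_iff_of_pos_right hdi).2
            linarith
        _ ≤ (c₁*(τ^2+h^2))^2 / dminus + ((e (n-1) i)^2/d i + (e n i)^2/d i)/2 := by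
            rw [add_div]
            have e1 : (c₁*(τ^2+h^2))^2 / d i ≤ (c₁*(τ^2+h^2))^2 / dminus := by
              apply div_le_div_of_nonneg_left (by positivity) hdminus (hd i).1
            have e2 : (((e (n-1) i)^2 + (e n i)^2)/2) / d i
                = ((e (n-1) i)^2/d i + (e n i)^2/d i)/2 := by ring
            linarith [e2]
    have hsum2 : ∑ i, R n i * w i / d i ≤ B + (Φ (n-1) + Φ n)/2 := by
      calc ∑ i, R n i * w i / d i
          ≤ ∑ i : Fin M, ((c₁*(τ^2+h^2))^2 / dminus + ((e (n-1) i)^2/d i + (e n i)^2/d i)/2) :=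
            Finset.sum_le_sum fun i _ => hRb i
        _ = B + (Φ (n-1) + Φ n)/2 := by
            rw [Finset.sum_add_distrib, Finset.sum_const, Finset.card_univ, Fintype.card_fin]
            rw [hB]
            simp only [hΦ]
            rw [show ∀ x y : Fin M → ℝ, (∑ i, ((x i) + (y i))/2) = ((∑ i, x i) + ∑ i, y i)/2 from
              fun x y => by rw [← Finset.sum_add_distrib, ← Finset.sum_div]]
            simp only [nsmul_eq_mul]
            ring
    have h6 : Φ n - Φ (n-1) ≤ τ * (B + (Φ (n-1) + Φ n)/2) := by
      rw [hsum]
      have := mul_le_mul_of_nonneg_left hsum2 hτpos.le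
      linarith
    nlinarith [h6, hτpos]
  have hτ2 : 0 < 1 - τ/2 := by linarith
  obtain ⟨r, hrdef⟩ : ∃ r : ℝ, r = (1 + τ/2)/(1 - τ/2) := ⟨_, rfl⟩
  have hrprop : (1 - τ/2) * r = 1 + τ/2 := by
    rw [hrdef, mul_comm, div_mul_cancel₀ _ (ne_of_gt hτ2)]
  have hrpos : 0 < r := by rw [hrdef]; exact div_pos (by linarith) hτ2
  have claim : ∀ m : ℕ, m ≤ N → Φ m ≤ r^m * B - B := by
    intro m
    induction m with
    | zero => intro _; simp [hΦ0]
    | succ k ih =>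
      intro hk
      have h1 := key (k+1) (by omega) hk
      simp only [Nat.add_sub_cancel] at h1
      have h2 := ih (by omega)
      have h4 : (1 - τ/2) * (r^(k+1) * B - B) = (1 + τ/2) * (r^k * B - B) + τ * B := by
        linear_combination (r^k * B) * hrprop
      have h5 : (1 + τ/2) * Φ k ≤ (1 + τ/2) * (r^k * B - B) :=
        mul_le_mul_of_nonneg_left h2 (by linarith)
      have h6 : (1 - τ/2) * Φ (k+1) ≤ (1 - τ/2) * (r^(k+1) * B - B) := by linarith
      exact le_of_mul_le_mul_left h6 hτ2
  have hrle : r ≤ Real.exp (2 * τ) := by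
    have h1 : 1 + τ ≤ Real.exp τ := by linarith [Real.add_one_le_exp τ]
    have h2 : (1 + τ)^2 ≤ Real.exp τ ^ 2 := by nlinarith
    have h3 : Real.exp (2*τ) = Real.exp τ ^ 2 := by rw [two_mul, Real.exp_add, sq]
    have h4 : r ≤ (1 + τ)^2 := by
      rw [hrdef, div_le_iff₀ hτ2]
      nlinarith
    linarith
  have hrn : ∀ m : ℕ, m ≤ N → r ^ m ≤ Real.exp (2 * T) := by
    intro m hm
    have h1 : r^m ≤ Real.exp (2*τ) ^ m := pow_le_pow_left₀ hrpos.le hrle m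
    have h2 : Real.exp (2*τ) ^ m = Real.exp (2*τ*m) := by
      rw [← Real.exp_nat_mul]; congr 1; ring
    have h3 : 2*τ*m ≤ 2*T := by
      have hmN : (m:ℝ) ≤ N := by exact_mod_cast hm
      nlinarith
    calc r^m ≤ Real.exp (2*τ) ^ m := h1
      _ = Real.exp (2*τ*m) := h2
      _ ≤ Real.exp (2*T) := Real.exp_le_exp.2 h3
  intro n hn1 hnN
  have hΦn : Φ n ≤ (Real.exp (2*T) - 1) * B := by
    have h1 := claim n hnN
    have h2 := hrn n hnN
    nlinarith
  have hexp1 : (1:ℝ) ≤ Real.exp (2*T) := by linarith [Real.add_one_le_exp (2*T)]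
  set K : ℝ := (Real.exp (2*T) - 1) * (xR - xL) * dplus / dminus with hK
  have hKnn : 0 ≤ K := by
    rw [hK]
    apply div_nonneg _ hdminus.le
    exact mul_nonneg (mul_nonneg (by linarith) (by linarith)) hdplus.le
  have hdot : e n ⬝ᵥ e n ≤ dplus * Φ n := by
    rw [dotProduct]
    simp only [hΦ]
    rw [Finset.mul_sum]
    apply Finset.sum_le_sum
    intro i _
    have hdi := hdpos i
    have h1 : e n i * e n i = d i * ((e n i)^2 / d i) := by field_simp
    rw [h1]
    exact mul_le_mul_of_nonneg_right (hd i).2 (div_nonneg (sq_nonneg _) hdi.le)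
  have hMc : (0:ℝ) ≤ (M:ℝ) := Nat.cast_nonneg M
  have hhM : h * M ≤ xR - xL := by
    rw [hhdef, div_mul_eq_mul_div, div_le_iff₀ (by positivity : (0:ℝ) < (M:ℝ)+1)]
    nlinarith
  have hE : (0:ℝ) ≤ Real.exp (2*T) - 1 := by linarith
  have hmain : h * (e n ⬝ᵥ e n) ≤ K * (c₁ * (τ^2 + h^2))^2 := by
    have h1 : h * (e n ⬝ᵥ e n) ≤ h * (dplus * Φ n) :=
      mul_le_mul_of_nonneg_left hdot hhpos.le
    have h2 : h * (dplus * Φ n) ≤ h * (dplus * ((Real.exp (2*T) - 1) * B)) := by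
      apply mul_le_mul_of_nonneg_left _ hhpos.le
      exact mul_le_mul_of_nonneg_left hΦn hdplus.le
    have h3 : h * (dplus * ((Real.exp (2*T) - 1) * B))
        = ((Real.exp (2*T) - 1) * (h * M) * dplus) / dminus * (c₁ * (τ^2 + h^2))^2 := by
      rw [hB]; ring
    have h5 : (Real.exp (2*T) - 1) * (h * M) * dplus
        ≤ (Real.exp (2*T) - 1) * (xR - xL) * dplus :=
      mul_le_mul_of_nonneg_right (mul_le_mul_of_nonneg_left hhM hE) hdplus.le
    have h4 : ((Real.exp (2*T) - 1) * (h * M) * dplus) / dminus * (c₁ * (τ^2 + h^2))^2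
        ≤ K * (c₁ * (τ^2 + h^2))^2 := by
      apply mul_le_mul_of_nonneg_right _ (by positivity)
      rw [hK]
      exact (div_le_div_iff_of_pos_right hdminus).2 h5
    linarith [h1, h2, h3 ▸ h2, h4]
  have hsq := Real.sqrt_le_sqrt hmain
  have hrw : Real.sqrt (K * (c₁ * (τ^2 + h^2))^2) = Real.sqrt K * (c₁ * (τ^2 + h^2)) := by
    rw [Real.sqrt_mul hKnn, Real.sqrt_sq (by positivity)]
  calc Real.sqrt (h * (e n ⬝ᵥ e n)) ≤ Real.sqrt K * (c₁ * (τ^2+h^2)) := by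
        rw [← hrw]; exact hsq
    _ = c₁ * Real.sqrt K * (τ^2 + h^2) := by ring
end

section
/- Let d be a function on (x_L,x_R) with d(x) ∈ [κ_min, κ_max] for positive constants κ_min, κ_max, suppose d is concave on (x_L,x_R), and assume κ_max − ν_α > 0, where ν_α = √2·(κ_max − κ_min)/ς_α. Let η > 0, D = diag(d(x_1),…,d(x_M)), d̄ = (1/M)·Σ_{i=1}^{M} d(x_i), A = I_M − η·D·G_α and P = I_M − η·d̄·G_α. Then P is invertible and, for every nonzero y ∈ ℝ^M, š ≤ ‖A·P⁻¹·y‖₂²/‖y‖₂² ≤ ŝ, where š = min{(κ_max − ν_α)/κ_max, κ_min²/κ_max²} and ŝ = max{(κ_max + ν_α)/κ_min, κ_max²/κ_min²}. Consequently every singular value of A·P⁻¹ lies in [√š, √ŝ] and the spectral condition number satisfies cond(A·P⁻¹) = ‖A·P⁻¹‖₂·‖(A·P⁻¹)⁻¹‖₂ ≤ √(ŝ/š), a bound independent of M, η, τ and h. -/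
open Matrix

/-!
The symmetric part of `G_α` has nonnegative off-diagonal entries and nonpositive row sums (this is
the sign pattern of the WSGD weights: `w₁ ≤ 0`, `w₀ + w₂ ≥ 0`, `w_k ≥ 0` for `k ≥ 3`, and partial
sums of length at least three are `≤ 0`), so `zᵀ G_α z ≤ 0`. For `u = η G_α z` this gives
`z ⬝ᵥ u ≤ 0`, which forces `‖z - D u‖ ≥ κmin ‖u‖` and `‖z - d̄ u‖ ≥ κmin ‖u‖`. The two vectors
differ by at most `(κmax - κmin) ‖u‖`, so their norms agree up to the factor `κmax / κmin`.
Taking `z = P⁻¹ y`, the singular values of `A P⁻¹` lie in `[κmin / κmax, κmax / κmin]`, and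
`(κmin / κmax)² ≥ š`, `(κmax / κmin)² ≤ ŝ`.
-/

open Finset

namespace WSGD

variable {α : ℝ}

lemma gcoef_succ (α : ℝ) (k : ℕ) :
    gcoef α (k + 1) = (1 - (α + 1) / ((k : ℝ) + 1)) * gcoef α k := by
  rw [gcoef]; push_cast; ring

lemma gcoef_one (α : ℝ) : gcoef α 1 = -α := by
  simp [gcoef]

lemma gcoef_two (α : ℝ) : gcoef α 2 = α * (α - 1) / 2 := by
  rw [gcoef_succ, gcoef_one]; ring

lemma gcoef_add_two_nonneg (hα₁ : 1 ≤ α) (hα₂ : α ≤ 2) (k : ℕ) : 0 ≤ gcoef α (k + 2) := by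
  induction k with
  | zero => rw [gcoef_two]; nlinarith
  | succ k ih =>
    rw [show k + 1 + 2 = k + 2 + 1 by ring, gcoef_succ]
    refine mul_nonneg ?_ ih
    rw [sub_nonneg, div_le_one (by positivity)]
    push_cast
    linarith [(k.cast_nonneg : (0 : ℝ) ≤ k)]

lemma gcoef_succ_eq_neg_mul_sum (α : ℝ) (n : ℕ) :
    gcoef α (n + 1) = -(α / ((n : ℝ) + 1)) * ∑ k ∈ range (n + 1), gcoef α k := by
  induction n with
  | zero => simp [gcoef]
  | succ n ih =>
    rw [sum_range_succ, gcoef_succ, ih]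
    push_cast
    field_simp
    ring

lemma sum_range_gcoef_nonpos (hα₁ : 1 ≤ α) (hα₂ : α ≤ 2) (n : ℕ) :
    ∑ k ∈ range (n + 2), gcoef α k ≤ 0 := by
  induction n with
  | zero => simp [sum_range_succ, gcoef]; linarith
  | succ n ih =>
    have hfac : 0 ≤ 1 - α / ((n : ℝ) + 2) := by
      rw [sub_nonneg, div_le_one (by positivity)]
      linarith [(n.cast_nonneg : (0 : ℝ) ≤ n)]
    have hrec : ∑ k ∈ range (n + 3), gcoef α k
        = (1 - α / ((n : ℝ) + 2)) * ∑ k ∈ range (n + 2), gcoef α k := by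
      rw [sum_range_succ _ (n + 2), gcoef_succ_eq_neg_mul_sum]
      push_cast
      ring
    rw [hrec]
    exact mul_nonpos_of_nonneg_of_nonpos hfac ih

lemma wcoef_succ (α : ℝ) (k : ℕ) :
    wcoef α (k + 1) = α / 2 * gcoef α (k + 1) + (2 - α) / 2 * gcoef α k := rfl

lemma wcoef_one_nonpos (hα₁ : 1 ≤ α) : wcoef α 1 ≤ 0 := by
  rw [wcoef_succ, gcoef_one]
  simp only [gcoef]
  nlinarith

lemma wcoef_zero_add_wcoef_two_nonneg (hα₁ : 1 ≤ α) : 0 ≤ wcoef α 0 + wcoef α 2 := by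
  rw [wcoef_succ, gcoef_two, gcoef_one]
  simp only [wcoef, gcoef]
  nlinarith [mul_nonneg (mul_nonneg (by linarith : (0 : ℝ) ≤ α) (by linarith : (0 : ℝ) ≤ α - 1))
    (by linarith : (0 : ℝ) ≤ α + 2)]

lemma wcoef_add_three_nonneg (hα₁ : 1 ≤ α) (hα₂ : α ≤ 2) (k : ℕ) : 0 ≤ wcoef α (k + 3) := by
  rw [wcoef_succ]
  have := gcoef_add_two_nonneg hα₁ hα₂ (k + 1)
  have := gcoef_add_two_nonneg hα₁ hα₂ k
  refine add_nonneg (mul_nonneg ?_ ?_) (mul_nonneg ?_ ?_) <;> linarith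

lemma sum_range_wcoef (α : ℝ) (n : ℕ) :
    ∑ k ∈ range (n + 1), wcoef α k
      = α / 2 * ∑ k ∈ range (n + 1), gcoef α k + (2 - α) / 2 * ∑ k ∈ range n, gcoef α k := by
  induction n with
  | zero => simp [wcoef]
  | succ n ih =>
    rw [sum_range_succ, ih, wcoef_succ, sum_range_succ _ (n + 1), sum_range_succ _ n]
    ring

lemma sum_range_wcoef_nonpos (hα₁ : 1 ≤ α) (hα₂ : α ≤ 2) (n : ℕ) :
    ∑ k ∈ range (n + 3), wcoef α k ≤ 0 := by
  rw [sum_range_wcoef]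
  have := sum_range_gcoef_nonpos hα₁ hα₂ (n + 1)
  have := sum_range_gcoef_nonpos hα₁ hα₂ n
  nlinarith

/-- The entry `G_{ab}` of `G_α`, as a function of indices `a b : ℕ`; it does not depend on `M`. -/
noncomputable def entry (α : ℝ) (a b : ℕ) : ℝ :=
  if b ≤ a + 1 then wcoef α (a + 1 - b) else 0

lemma Gmat_apply (α : ℝ) (M : ℕ) (i j : Fin M) : Gmat α M i j = entry α i j := rfl

lemma entry_succ_succ (α : ℝ) (a b : ℕ) : entry α (a + 1) (b + 1) = entry α a b := by
  simp only [entry, add_le_add_iff_right, Nat.add_sub_add_right]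

lemma entry_add_entry_nonneg_of_lt (hα₁ : 1 ≤ α) (hα₂ : α ≤ 2) {a b : ℕ} (hab : a < b) :
    0 ≤ entry α a b + entry α b a := by
  obtain ⟨k, rfl⟩ := Nat.exists_eq_add_of_lt hab
  rcases k with _ | k
  · rw [entry, entry, if_pos (by omega), if_pos (by omega), Nat.sub_self,
      show a + 1 + 1 - a = 2 by omega]
    exact wcoef_zero_add_wcoef_two_nonneg hα₁
  · rw [entry, entry, if_neg (by omega), if_pos (by omega),
      show a + (k + 1) + 1 + 1 - a = k + 3 by omega, zero_add]
    exact wcoef_add_three_nonneg hα₁ hα₂ k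

lemma entry_add_entry_nonneg (hα₁ : 1 ≤ α) (hα₂ : α ≤ 2) {a b : ℕ} (hab : a ≠ b) :
    0 ≤ entry α a b + entry α b a := by
  rcases hab.lt_or_gt with h | h
  · exact entry_add_entry_nonneg_of_lt hα₁ hα₂ h
  · rw [add_comm]; exact entry_add_entry_nonneg_of_lt hα₁ hα₂ h

lemma sum_range_entry_row (α : ℝ) {a N : ℕ} (h : a + 2 ≤ N) :
    ∑ j ∈ range N, entry α a j = ∑ k ∈ range (a + 2), wcoef α k := by
  obtain ⟨m, rfl⟩ := Nat.exists_eq_add_of_le h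
  have hzero : ∑ j ∈ range m, entry α a (a + 2 + j) = 0 :=
    sum_eq_zero fun j _ => by rw [entry, if_neg (by omega)]
  rw [sum_range_add, hzero, add_zero]
  conv_rhs => rw [← sum_range_reflect]
  exact sum_congr rfl fun j hj => by
    rw [entry, if_pos (by simp at hj; omega)]; congr 1

lemma sum_range_entry_col (α : ℝ) {a N : ℕ} (h : a + 2 ≤ N) :
    ∑ j ∈ range N, entry α j (a + 1) = ∑ k ∈ range (N - a), wcoef α k := by
  obtain ⟨m, rfl⟩ := Nat.exists_eq_add_of_le (h.trans' (by omega) : a ≤ N)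
  have hzero : ∑ j ∈ range a, entry α j (a + 1) = 0 :=
    sum_eq_zero fun j hj => by rw [entry, if_neg (by simp at hj; omega)]
  rw [sum_range_add, hzero, zero_add, Nat.add_sub_cancel_left]
  exact sum_congr rfl fun j _ => by rw [entry, if_pos (by omega)]; congr 1; omega

/-- Row `i` of `G_α + G_αᵀ` is row `i + 1` of the same matrix of size `M + 2`, minus two
nonnegative off-diagonal entries; in that larger matrix both partial sums have length at least
three. -/
lemma sum_range_entry_add_entry_nonpos (hα₁ : 1 ≤ α) (hα₂ : α ≤ 2) {i M : ℕ} (hi : i < M) :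
    ∑ j ∈ range M, (entry α i j + entry α j i) ≤ 0 := by
  set f : ℕ → ℝ := fun j => entry α (i + 1) j + entry α j (i + 1)
  have hshift : ∑ j ∈ range M, (entry α i j + entry α j i) = ∑ j ∈ range M, f (j + 1) := by
    simp only [f, entry_succ_succ]
  have hbig : ∑ j ∈ range (M + 2), f j = ∑ j ∈ range M, f (j + 1) + f (M + 1) + f 0 := by
    rw [sum_range_succ', sum_range_succ]
  have hrow : ∑ j ∈ range (M + 2), f j
      = ∑ k ∈ range (i + 3), wcoef α k + ∑ k ∈ range (M - i + 2), wcoef α k := by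
    rw [sum_add_distrib, sum_range_entry_row α (by omega), sum_range_entry_col α (by omega),
      show M + 2 - i = M - i + 2 by omega]
  have hM1 := entry_add_entry_nonneg hα₁ hα₂ (show i + 1 ≠ M + 1 by omega)
  have h0 := entry_add_entry_nonneg hα₁ hα₂ (show i + 1 ≠ 0 by omega)
  have hs1 := sum_range_wcoef_nonpos hα₁ hα₂ i
  have hs2 := sum_range_wcoef_nonpos hα₁ hα₂ (M - i - 1)
  rw [show M - i - 1 + 3 = M - i + 2 by omega] at hs2
  linarith

end WSGD

open WSGD

/-- Each product `y i * y j` with `i ≠ j` is bounded by `(y i ^ 2 + y j ^ 2) / 2`, and the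
resulting quadratic terms regroup into the row sums of `B + Bᵀ`. -/
theorem Matrix.dotProduct_mulVec_self_nonpos {n : Type*} [Fintype n] (B : Matrix n n ℝ)
    (hoff : ∀ i j, i ≠ j → 0 ≤ B i j + B j i) (hsum : ∀ i, ∑ j, (B i j + B j i) ≤ 0)
    (y : n → ℝ) : y ⬝ᵥ (B *ᵥ y) ≤ 0 := by
  set C : n → n → ℝ := fun i j => B i j + B j i
  have hdouble : 2 * (y ⬝ᵥ (B *ᵥ y)) = ∑ i, ∑ j, C i j * (y i * y j) := by
    simp only [C, dotProduct, mulVec, mul_sum, two_mul, add_mul, sum_add_distrib]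
    congr 1
    · exact sum_congr rfl fun i _ => sum_congr rfl fun j _ => by ring
    · rw [sum_comm]; exact sum_congr rfl fun i _ => sum_congr rfl fun j _ => by ring
  have hamgm : ∀ i j, C i j * (y i * y j) ≤ C i j * ((y i ^ 2 + y j ^ 2) / 2) := by
    intro i j
    rcases eq_or_ne i j with rfl | hij
    · exact le_of_eq (by ring)
    · exact mul_le_mul_of_nonneg_left (by nlinarith [sq_nonneg (y i - y j)]) (hoff i j hij)
  have hregroup : ∑ i, ∑ j, C i j * ((y i ^ 2 + y j ^ 2) / 2) = ∑ i, (∑ j, C i j) * y i ^ 2 := by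
    have hswap : ∑ i, ∑ j, C i j * y j ^ 2 = ∑ i, ∑ j, C i j * y i ^ 2 := by
      rw [sum_comm]; exact sum_congr rfl fun i _ => sum_congr rfl fun j _ => by simp only [C]; ring
    simp only [mul_add, add_div, sum_add_distrib, mul_div_assoc', ← sum_div, hswap, sum_mul]
    ring
  have hrows : ∑ i, (∑ j, C i j) * y i ^ 2 ≤ 0 :=
    sum_nonpos fun i _ => mul_nonpos_of_nonpos_of_nonneg (hsum i) (sq_nonneg _)
  linarith [sum_le_sum fun i (_ : i ∈ univ) => sum_le_sum fun j (_ : j ∈ univ) => hamgm i j]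

theorem Gmat_dotProduct_mulVec_nonpos {α : ℝ} (hα₁ : 1 ≤ α) (hα₂ : α ≤ 2) (M : ℕ)
    (y : Fin M → ℝ) : y ⬝ᵥ (Gmat α M *ᵥ y) ≤ 0 := by
  refine Matrix.dotProduct_mulVec_self_nonpos _ (fun i j hij => ?_) (fun i => ?_) y
  · exact entry_add_entry_nonneg hα₁ hα₂ (Fin.val_injective.ne hij)
  · simp only [Gmat_apply]
    rw [Fin.sum_univ_eq_sum_range (fun j => entry α i j + entry α j i)]
    exact sum_range_entry_add_entry_nonpos hα₁ hα₂ i.isLt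

section DiagonalPerturbation

open WithLp

variable {n : Type*} [Fintype n]

lemma norm_toLp_sq (v : n → ℝ) : ‖toLp 2 v‖ ^ 2 = v ⬝ᵥ v := by
  rw [← real_inner_self_eq_norm_sq, EuclideanSpace.inner_toLp_toLp, star_trivial]

/-- Weighting by `1 / d`: `∑ (z - d u)ᵢ² / dᵢ = ∑ zᵢ² / dᵢ - 2 z ⬝ᵥ u + ∑ dᵢ uᵢ² ≥ ∑ dᵢ uᵢ²`. -/
lemma sq_mul_dotProduct_self_le {a : ℝ} (ha : 0 < a) {d : n → ℝ} (hd : ∀ i, a ≤ d i)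
    {z u : n → ℝ} (hzu : z ⬝ᵥ u ≤ 0) :
    a ^ 2 * (u ⬝ᵥ u) ≤ (z - d * u) ⬝ᵥ (z - d * u) := by
  have hd0 : ∀ i, 0 < d i := fun i => ha.trans_le (hd i)
  have hweighted : ∑ i, (z - d * u) i ^ 2 / d i
      = ∑ i, z i ^ 2 / d i - 2 * (z ⬝ᵥ u) + ∑ i, d i * u i ^ 2 := by
    simp only [dotProduct, mul_sum, ← sum_sub_distrib, ← sum_add_distrib]
    refine sum_congr rfl fun i _ => ?_
    simp only [Pi.sub_apply, Pi.mul_apply]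
    field_simp [(hd0 i).ne']
    ring
  have hz : 0 ≤ ∑ i, z i ^ 2 / d i := sum_nonneg fun i _ => div_nonneg (sq_nonneg _) (hd0 i).le
  calc a ^ 2 * (u ⬝ᵥ u) = a * ∑ i, a * u i ^ 2 := by simp only [dotProduct, mul_sum]; ring_nf
    _ ≤ a * ∑ i, d i * u i ^ 2 := by gcongr with i; exact hd i
    _ ≤ a * ∑ i, (z - d * u) i ^ 2 / d i := mul_le_mul_of_nonneg_left (by linarith) ha.le
    _ = ∑ i, a / d i * (z - d * u) i ^ 2 := by rw [mul_sum]; exact sum_congr rfl fun i _ => by ring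
    _ ≤ ∑ i, (z - d * u) i ^ 2 := by
      gcongr with i
      exact mul_le_of_le_one_left (sq_nonneg _) ((div_le_one (hd0 i)).2 (hd i))
    _ = (z - d * u) ⬝ᵥ (z - d * u) := by simp only [dotProduct, sq]

lemma mul_norm_toLp_le {a : ℝ} (ha : 0 < a) {d : n → ℝ} (hd : ∀ i, a ≤ d i)
    {z u : n → ℝ} (hzu : z ⬝ᵥ u ≤ 0) :
    a * ‖toLp 2 u‖ ≤ ‖toLp 2 (z - d * u)‖ := by
  refine (pow_le_pow_iff_left₀ (by positivity) (norm_nonneg _) two_ne_zero).1 ?_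
  rw [mul_pow, norm_toLp_sq, norm_toLp_sq]
  exact sq_mul_dotProduct_self_le ha hd hzu

lemma eq_zero_of_sub_mul_eq_zero {a : ℝ} (ha : 0 < a) {d : n → ℝ} (hd : ∀ i, a ≤ d i)
    {z u : n → ℝ} (hzu : z ⬝ᵥ u ≤ 0) (h : z - d * u = 0) : z = 0 := by
  have hu : u ⬝ᵥ u ≤ 0 := by
    have := sq_mul_dotProduct_self_le ha hd hzu
    rw [h, zero_dotProduct] at this
    exact nonpos_of_mul_nonpos_right this (by positivity)
  rw [sub_eq_zero.1 h, dotProduct_self_eq_zero.1 (le_antisymm hu (norm_toLp_sq u ▸ sq_nonneg _)),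
    mul_zero]

lemma norm_toLp_mul_sub_smul_le {a b c : ℝ} {d : n → ℝ} (hd : ∀ i, d i ∈ Set.Icc a b)
    (hc : c ∈ Set.Icc a b) (u : n → ℝ) :
    ‖toLp 2 (d * u - c • u)‖ ≤ (b - a) * ‖toLp 2 u‖ := by
  have hab : 0 ≤ b - a := by linarith [hc.1, hc.2]
  refine (pow_le_pow_iff_left₀ (norm_nonneg _) (by positivity) two_ne_zero).1 ?_
  rw [mul_pow, norm_toLp_sq, norm_toLp_sq]
  simp only [dotProduct, mul_sum]
  refine sum_le_sum fun i _ => ?_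
  have : (d i - c) ^ 2 ≤ (b - a) ^ 2 :=
    sq_le_sq' (by linarith [(hd i).1, hc.2]) (by linarith [(hd i).2, hc.1])
  simp only [Pi.sub_apply, Pi.mul_apply, Pi.smul_apply, smul_eq_mul]
  nlinarith [mul_le_mul_of_nonneg_right this (mul_self_nonneg (u i))]

end DiagonalPerturbation

theorem mul_norm_le_mul_norm_of_norm_sub_le {E : Type*} [SeminormedAddCommGroup E] {a b r : ℝ}
    {p q : E} (ha : 0 ≤ a) (hab : a ≤ b) (hpq : ‖p - q‖ ≤ (b - a) * r) (hq : a * r ≤ ‖q‖) :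
    a * ‖p‖ ≤ b * ‖q‖ := by
  have htri : ‖p‖ ≤ ‖q‖ + ‖p - q‖ := norm_le_insert' p q |>.trans_eq (by rw [add_comm])
  nlinarith [mul_le_mul_of_nonneg_left hq (sub_nonneg.2 hab)]

namespace Matrix

open WithLp

variable {n : Type*} [Fintype n] {a b c : ℝ}

theorem dotProduct_mulVec_self_div_mem_Icc {Q : Matrix n n ℝ} (ha : 0 < a) (hb : 0 < b)
    (hup : ∀ y, a * ‖toLp 2 (Q *ᵥ y)‖ ≤ b * ‖toLp 2 y‖)
    (hlow : ∀ y, a * ‖toLp 2 y‖ ≤ b * ‖toLp 2 (Q *ᵥ y)‖) {y : n → ℝ} (hy : y ≠ 0) :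
    (Q *ᵥ y) ⬝ᵥ (Q *ᵥ y) / (y ⬝ᵥ y) ∈ Set.Icc ((a / b) ^ 2) ((b / a) ^ 2) := by
  have hy' : 0 < ‖toLp 2 y‖ := norm_pos_iff.2 fun h => hy (toLp_injective 2 h)
  rw [← norm_toLp_sq, ← norm_toLp_sq, ← div_pow]
  refine ⟨pow_le_pow_left₀ (by positivity) ?_ 2, pow_le_pow_left₀ (by positivity) ?_ 2⟩
  · rw [div_le_div_iff₀ hb hy']; linarith [hlow y]
  · rw [div_le_div_iff₀ hy' ha]; linarith [hup y]

variable [DecidableEq n]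

lemma one_sub_diagonal_mul_mulVec (d : n → ℝ) (K : Matrix n n ℝ) (z : n → ℝ) :
    (1 - diagonal d * K) *ᵥ z = z - d * (K *ᵥ z) := by
  ext i
  simp [sub_mulVec, ← mulVec_mulVec, mulVec_diagonal]

lemma one_sub_smul_mulVec (c : ℝ) (K : Matrix n n ℝ) (z : n → ℝ) :
    (1 - c • K) *ᵥ z = z - c • (K *ᵥ z) := by
  rw [sub_mulVec, one_mulVec, smul_mulVec]

variable {K : Matrix n n ℝ} {d : n → ℝ}

theorem isUnit_det_one_sub_diagonal_mul (hK : ∀ z, z ⬝ᵥ (K *ᵥ z) ≤ 0) (ha : 0 < a)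
    (hd : ∀ i, a ≤ d i) : IsUnit (1 - diagonal d * K).det := by
  rw [isUnit_iff_ne_zero, Ne, ← exists_mulVec_eq_zero_iff]
  rintro ⟨z, hz, hAz⟩
  rw [one_sub_diagonal_mul_mulVec] at hAz
  exact hz (eq_zero_of_sub_mul_eq_zero ha hd (hK z) hAz)

theorem isUnit_det_one_sub_smul (hK : ∀ z, z ⬝ᵥ (K *ᵥ z) ≤ 0) (hc : 0 < c) :
    IsUnit (1 - c • K).det := by
  rw [smul_eq_diagonal_mul]
  exact isUnit_det_one_sub_diagonal_mul hK hc fun _ => le_rfl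

/-- With `u = K z`, both `(1 - D K) z = z - D u` and `(1 - c K) z = z - c u` have norm at least
`a ‖u‖`, while they differ by at most `(b - a) ‖u‖`. -/
theorem norm_one_sub_diagonal_mul_mulVec_comparable (hK : ∀ z, z ⬝ᵥ (K *ᵥ z) ≤ 0) (ha : 0 < a)
    (hd : ∀ i, d i ∈ Set.Icc a b) (hc : c ∈ Set.Icc a b) (z : n → ℝ) :
    a * ‖toLp 2 ((1 - diagonal d * K) *ᵥ z)‖ ≤ b * ‖toLp 2 ((1 - c • K) *ᵥ z)‖ ∧
      a * ‖toLp 2 ((1 - c • K) *ᵥ z)‖ ≤ b * ‖toLp 2 ((1 - diagonal d * K) *ᵥ z)‖ := by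
  set u := K *ᵥ z
  rw [one_sub_diagonal_mul_mulVec, one_sub_smul_mulVec]
  have hab : a ≤ b := hc.1.trans hc.2
  have hdiff : ‖toLp 2 (z - d * u) - toLp 2 (z - c • u)‖ ≤ (b - a) * ‖toLp 2 u‖ := by
    rw [← toLp_sub, sub_sub_sub_cancel_left, toLp_sub, norm_sub_rev, ← toLp_sub]
    exact norm_toLp_mul_sub_smul_le hd hc u
  have hA : a * ‖toLp 2 u‖ ≤ ‖toLp 2 (z - d * u)‖ :=
    mul_norm_toLp_le ha (fun i => (hd i).1) (hK z)
  have hP : a * ‖toLp 2 u‖ ≤ ‖toLp 2 (z - c • u)‖ :=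
    mul_norm_toLp_le (d := fun _ => c) ha (fun _ => hc.1) (hK z)
  exact ⟨mul_norm_le_mul_norm_of_norm_sub_le ha.le hab hdiff hP,
    mul_norm_le_mul_norm_of_norm_sub_le ha.le hab (by rwa [norm_sub_rev]) hA⟩

theorem mul_norm_mul_nonsing_inv_mulVec_comparable {A P : Matrix n n ℝ} (hP : IsUnit P.det)
    (h : ∀ z, a * ‖toLp 2 (A *ᵥ z)‖ ≤ b * ‖toLp 2 (P *ᵥ z)‖ ∧
      a * ‖toLp 2 (P *ᵥ z)‖ ≤ b * ‖toLp 2 (A *ᵥ z)‖) (y : n → ℝ) :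
    a * ‖toLp 2 ((A * P⁻¹) *ᵥ y)‖ ≤ b * ‖toLp 2 y‖ ∧
      a * ‖toLp 2 y‖ ≤ b * ‖toLp 2 ((A * P⁻¹) *ᵥ y)‖ := by
  have hy : P *ᵥ (P⁻¹ *ᵥ y) = y := by rw [mulVec_mulVec, mul_nonsing_inv _ hP, one_mulVec]
  simpa only [hy, mulVec_mulVec] using h (P⁻¹ *ᵥ y)

theorem norm_toEuclideanCLM_le {Q : Matrix n n ℝ} (hc : 0 ≤ c)
    (h : ∀ v, ‖toLp 2 (Q *ᵥ v)‖ ≤ c * ‖toLp 2 v‖) : ‖toEuclideanCLM (𝕜 := ℝ) Q‖ ≤ c :=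
  ContinuousLinearMap.opNorm_le_bound _ hc fun x => by
    simpa only [← toEuclideanCLM_toLp, toLp_ofLp] using h (ofLp x)

variable {Q : Matrix n n ℝ}

theorem norm_toEuclideanCLM_mul_norm_toEuclideanCLM_inv_le (ha : 0 < a) (hb : 0 ≤ b)
    (hup : ∀ y, a * ‖toLp 2 (Q *ᵥ y)‖ ≤ b * ‖toLp 2 y‖)
    (hlow : ∀ y, a * ‖toLp 2 y‖ ≤ b * ‖toLp 2 (Q *ᵥ y)‖) :
    ‖toEuclideanCLM (𝕜 := ℝ) Q‖ * ‖toEuclideanCLM (𝕜 := ℝ) Q⁻¹‖ ≤ (b / a) ^ 2 := by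
  have hQ : IsUnit Q.det := by
    rw [isUnit_iff_ne_zero, Ne, ← exists_mulVec_eq_zero_iff]
    rintro ⟨y, hy, hQy⟩
    have := hlow y
    rw [hQy, toLp_zero, norm_zero, mul_zero] at this
    exact hy (toLp_injective 2 (norm_le_zero_iff.1 (nonpos_of_mul_nonpos_right this ha) :))
  have hdiv : ∀ {s t : ℝ}, a * s ≤ b * t → s ≤ b / a * t := fun h => by
    rw [div_mul_eq_mul_div, le_div_iff₀ ha]; linarith
  have hnormQ := norm_toEuclideanCLM_le (by positivity) fun y => hdiv (hup y)
  have hnormQinv : ‖toEuclideanCLM (𝕜 := ℝ) Q⁻¹‖ ≤ b / a :=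
    norm_toEuclideanCLM_le (by positivity) fun y => hdiv <| by
      simpa only [mulVec_mulVec, mul_nonsing_inv _ hQ, one_mulVec] using hlow (Q⁻¹ *ᵥ y)
  rw [sq]
  exact mul_le_mul hnormQ hnormQinv (norm_nonneg _) (by positivity)

end Matrix

lemma grid_mem_Ioo {xL xR : ℝ} (hx : xL < xR) {M i : ℕ} (hi : i < M) :
    xL + ((i : ℝ) + 1) * ((xR - xL) / (M + 1)) ∈ Set.Ioo xL xR := by
  have hi' : (i : ℝ) + 1 < M + 1 := by exact_mod_cast Nat.succ_lt_succ hi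
  have hlen : 0 < xR - xL := sub_pos.2 hx
  constructor
  · have : 0 < ((i : ℝ) + 1) * ((xR - xL) / (M + 1)) := by positivity
    linarith
  · have hstep : ((i : ℝ) + 1) * ((xR - xL) / (M + 1)) < (M + 1) * ((xR - xL) / (M + 1)) :=
      mul_lt_mul_of_pos_right hi' (by positivity)
    rw [mul_div_cancel₀ _ (by positivity)] at hstep
    linarith

lemma Finset.sum_div_card_mem_Icc {ι : Type*} {s : Finset ι} (hs : s.Nonempty) {f : ι → ℝ}
    {a b : ℝ} (hf : ∀ i ∈ s, f i ∈ Set.Icc a b) : (∑ i ∈ s, f i) / #s ∈ Set.Icc a b := by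
  have hcard : (0 : ℝ) < #s := by exact_mod_cast hs.card_pos
  rw [Set.mem_Icc, le_div_iff₀ hcard, div_le_iff₀ hcard, mul_comm a, mul_comm b]
  exact ⟨by simpa using card_nsmul_le_sum s f a fun i hi => (hf i hi).1,
    by simpa using sum_le_card_nsmul s f b fun i hi => (hf i hi).2⟩

lemma sq_div_le_sqrt_div {a b s S : ℝ} (ha : 0 < a) (hb : 0 < b) (hs : 0 < s)
    (hsa : s ≤ a ^ 2 / b ^ 2) (hS : b ^ 2 / a ^ 2 ≤ S) : (b / a) ^ 2 ≤ Real.sqrt (S / s) := by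
  refine Real.le_sqrt_of_sq_le ?_
  calc ((b / a) ^ 2) ^ 2 = (b ^ 2 / a ^ 2) / (a ^ 2 / b ^ 2) := by field_simp
    _ ≤ S / s := div_le_div₀ ((by positivity : (0 : ℝ) ≤ _).trans hS) hS hs hsa

theorem toeplitz_preconditioned_cond_concave_general (α : ℝ) (hα : α ∈ Set.Ioo (1 : ℝ) 2)
    (xL xR : ℝ) (hx : xL < xR) (M : ℕ) (hM : 0 < M)
    (d : ℝ → ℝ) (κmin κmax : ℝ) (hκmin : 0 < κmin) (hκmax : 0 < κmax)
    (hbound : ∀ x ∈ Set.Ioo xL xR, d x ∈ Set.Icc κmin κmax)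
    (hν : 0 < κmax - Real.sqrt 2 * (κmax - κmin) / |Real.cos (α * Real.pi / 2)|)
    (η : ℝ) (hη : 0 < η) :
    let h := (xR - xL) / (M + 1)
    let X : Fin M → ℝ := fun i => xL + ((i : ℕ) + 1) * h
    let D : Matrix (Fin M) (Fin M) ℝ := Matrix.diagonal fun i => d (X i)
    let dbar := (∑ i : Fin M, d (X i)) / M
    let A := (1 : Matrix (Fin M) (Fin M) ℝ) - η • (D * Gmat α M)
    let P := (1 : Matrix (Fin M) (Fin M) ℝ) - (η * dbar) • Gmat α M
    let να := Real.sqrt 2 * (κmax - κmin) / |Real.cos (α * Real.pi / 2)|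
    let sLow := min ((κmax - να) / κmax) (κmin ^ 2 / κmax ^ 2)
    let sUp := max ((κmax + να) / κmin) (κmax ^ 2 / κmin ^ 2)
    IsUnit P ∧
    (∀ y : Fin M → ℝ, y ≠ 0 →
      sLow ≤ (((A * P⁻¹) *ᵥ y) ⬝ᵥ ((A * P⁻¹) *ᵥ y)) / (y ⬝ᵥ y) ∧
      (((A * P⁻¹) *ᵥ y) ⬝ᵥ ((A * P⁻¹) *ᵥ y)) / (y ⬝ᵥ y) ≤ sUp) ∧
    ‖Matrix.toEuclideanCLM (𝕜 := ℝ) (A * P⁻¹)‖ *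
        ‖Matrix.toEuclideanCLM (𝕜 := ℝ) ((A * P⁻¹)⁻¹)‖ ≤ Real.sqrt (sUp / sLow) := by
  intro h X D dbar A P να sLow sUp
  have hdX : ∀ i, d (X i) ∈ Set.Icc κmin κmax := fun i => hbound _ (grid_mem_Ioo hx i.isLt)
  have hdbar : dbar ∈ Set.Icc κmin κmax := by
    simpa [dbar] using Finset.sum_div_card_mem_Icc (univ_nonempty_iff.2 ⟨⟨0, hM⟩⟩) fun i _ => hdX i
  have hK : ∀ z, z ⬝ᵥ ((η • Gmat α M) *ᵥ z) ≤ 0 := fun z => by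
    rw [smul_mulVec, dotProduct_smul, smul_eq_mul]
    exact mul_nonpos_of_nonneg_of_nonpos hη.le (Gmat_dotProduct_mulVec_nonpos hα.1.le hα.2.le M z)
  have hA : A = 1 - diagonal (fun i => d (X i)) * (η • Gmat α M) := by rw [Matrix.mul_smul]
  have hP : P = 1 - dbar • (η • Gmat α M) := by rw [smul_smul, mul_comm]
  have hPdet : IsUnit P.det := hP ▸ isUnit_det_one_sub_smul hK (hκmin.trans_le hdbar.1)
  have hbounds := mul_norm_mul_nonsing_inv_mulVec_comparable hPdet fun z =>
    hA ▸ hP ▸ norm_one_sub_diagonal_mul_mulVec_comparable hK hκmin hdX hdbar z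
  have hsLow : 0 < sLow := lt_min (div_pos hν hκmax) (by positivity)
  refine ⟨(isUnit_iff_isUnit_det P).2 hPdet, fun y hy => ?_, ?_⟩
  · obtain ⟨hlow, hup⟩ := dotProduct_mulVec_self_div_mem_Icc hκmin hκmax
      (fun y => (hbounds y).1) (fun y => (hbounds y).2) hy
    exact ⟨(min_le_right _ _).trans (div_pow κmin κmax 2 ▸ hlow),
      hup.trans (div_pow κmax κmin 2 ▸ le_max_right _ _)⟩
  · refine (norm_toEuclideanCLM_mul_norm_toEuclideanCLM_inv_le hκmin hκmax.le
      (fun y => (hbounds y).1) (fun y => (hbounds y).2)).trans ?_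
    exact sq_div_le_sqrt_div hκmin hκmax hsLow (min_le_right _ _) (le_max_right _ _)

/-- Theorem 2.4: condition-number estimate for the Toeplitz-preconditioned matrix,
concave case. With `A = I − η D G_α`, `P = I − η d̄ G_α`, `d` concave,
`d(x) ∈ [κ_min, κ_max]`, `κ_max − ν_α > 0` where `ν_α = √2(κ_max−κ_min)/ς_α`:
`P` is invertible, the Rayleigh quotient `‖A P⁻¹ y‖₂²/‖y‖₂²` lies in `[sLow, sUp]`
for every nonzero `y` (hence all singular values of `AP⁻¹` lie in `[√sLow, √sUp]`),
and `cond(AP⁻¹) = ‖AP⁻¹‖₂ ‖(AP⁻¹)⁻¹‖₂ ≤ √(sUp/sLow)`. -/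
theorem toeplitz_preconditioned_cond_concave (α : ℝ) (hα : α ∈ Set.Ioo (1 : ℝ) 2)
    (xL xR : ℝ) (hx : xL < xR) (M : ℕ) (hM : 0 < M)
    (d : ℝ → ℝ) (κmin κmax : ℝ) (hκmin : 0 < κmin) (hκmax : 0 < κmax)
    (hbound : ∀ x ∈ Set.Ioo xL xR, d x ∈ Set.Icc κmin κmax)
    (hconc : ConcaveOn ℝ (Set.Ioo xL xR) d)
    (hν : 0 < κmax - Real.sqrt 2 * (κmax - κmin) / |Real.cos (α * Real.pi / 2)|)
    (η : ℝ) (hη : 0 < η) :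
    let h := (xR - xL) / (M + 1)
    let X : Fin M → ℝ := fun i => xL + ((i : ℕ) + 1) * h
    let D : Matrix (Fin M) (Fin M) ℝ := Matrix.diagonal fun i => d (X i)
    let dbar := (∑ i : Fin M, d (X i)) / M
    let A := (1 : Matrix (Fin M) (Fin M) ℝ) - η • (D * Gmat α M)
    let P := (1 : Matrix (Fin M) (Fin M) ℝ) - (η * dbar) • Gmat α M
    let να := Real.sqrt 2 * (κmax - κmin) / |Real.cos (α * Real.pi / 2)|
    let sLow := min ((κmax - να) / κmax) (κmin ^ 2 / κmax ^ 2)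
    let sUp := max ((κmax + να) / κmin) (κmax ^ 2 / κmin ^ 2)
    IsUnit P ∧
    (∀ y : Fin M → ℝ, y ≠ 0 →
      sLow ≤ (((A * P⁻¹) *ᵥ y) ⬝ᵥ ((A * P⁻¹) *ᵥ y)) / (y ⬝ᵥ y) ∧
      (((A * P⁻¹) *ᵥ y) ⬝ᵥ ((A * P⁻¹) *ᵥ y)) / (y ⬝ᵥ y) ≤ sUp) ∧
    ‖Matrix.toEuclideanCLM (𝕜 := ℝ) (A * P⁻¹)‖ *
        ‖Matrix.toEuclideanCLM (𝕜 := ℝ) ((A * P⁻¹)⁻¹)‖ ≤ Real.sqrt (sUp / sLow) :=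
  toeplitz_preconditioned_cond_concave_general α hα xL xR hx M hM d κmin κmax hκmin hκmax hbound hν
    η hη
end
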